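/- arXiv:2503.14133 — 5 statements merged into one kernel-verified Lean document; each statement's English description precedes it below -/
import Mathlib

section
/- Let p, r > 0 and let (α_n)_{n≥1} be a non-negative sequence. Define ω̄_l^p := Σ_{n=1}^∞ α_n/(n^{pr} + l^{pr}) for l ∈ ℕ, and assume ω̄_l^p is finite for each l. Let 0 < q ≤ 1 and let (μ_k) be a discretizing sequence for (ω̄_l^p) (with parameter λ > 4 large enough). Then for any non-negative sequence (f_j), Σ_{n=1}^∞ α_n · (Σ_{j=1}^∞ f_j/(j^{pr/q} + n^{pr/q}))^q is comparable, up to constants depending only on p, q, r, λ, to Σ_k (Σ_{μ_k ≤ l < μ_{k+1}} ω̄_l^{p/q} · f_l)^q, where the outer sum runs over all indices k of the discretizing sequence. -/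
open scoped ENNReal

/-- The weight `ω̄_l^p = Σ_{n≥1} α_n/(n^{pr}+l^{pr})`. -/
noncomputable def omegaBar (p r : ℝ) (α : ℕ → ℝ≥0∞) (l : ℕ) : ℝ≥0∞ :=
  ∑' n : ℕ, α (n+1) / (((n+1 : ℕ) : ℝ≥0∞) ^ (p * r) + (l : ℝ≥0∞) ^ (p * r))

/-!
After the shift `μ k = ν k + 1`, `a n = α (n+1)`, `g j = f (j+1)`, the left-hand side is
`Σ_n a_n (Σ_j g_j / (D_j + D_n))^q` and the weights are `w m = Σ_n a_n / (E_n + E_m)` with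
`E = D ^ q`; cut `ℕ` into the blocks `[ν k, ν (k+1))`.

Upper bound: `t ↦ t ^ q` is subadditive, so the inner sum splits into blocks, and
`(D_s + D_n)^q ≥ (E_s + E_n) / 2`. On a block of type `I` the kernel `1 / (D_m + D_n)` is largest
at the first index `s`, so summing against `a` gives `w s`, comparable to every `w m` of the block.
On a block of type `J`, `1 / (D_m + D_n) ≤ (D_t / D_m) / (D_t + D_n)` at the last index `t`, which
gives `w t * E t`, comparable to every `w m * E m` of the block.

Lower bound: splitting the sum defining `w m * E m` at the block boundaries, the blocks before the
previous one and after the next one contribute at most `4 λ⁻¹ w m * E m`, by the geometric decay of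
`w (ν k)` and growth of `w (ν k) * E (ν k)`, and are absorbed since `λ > 4`. What is left are the
masses of `a` on adjacent blocks, and each such mass times a block sum is bounded by testing the
left-hand side on the block, where the kernel is comparable to `1 / D_m`, `1 / D_n` or
`1 / D_t`.
-/

open Finset

namespace DiscretizingSequence

section Inequalities

variable {q : ℝ}

theorem rpow_sum_le_sum_rpow {ι : Type*} (hq0 : 0 < q) (hq1 : q ≤ 1) (s : Finset ι)
    (g : ι → ℝ≥0∞) : (∑ i ∈ s, g i) ^ q ≤ ∑ i ∈ s, g i ^ q := by
  classical
  induction s using Finset.induction_on with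
  | empty => simp [ENNReal.zero_rpow_of_pos hq0]
  | insert i s hi ih =>
    rw [sum_insert hi, sum_insert hi]
    exact (ENNReal.rpow_add_le_add_rpow _ _ hq0.le hq1).trans (by gcongr)

theorem rpow_tsum_le_tsum_rpow (hq0 : 0 < q) (hq1 : q ≤ 1) (g : ℕ → ℝ≥0∞) :
    (∑' i, g i) ^ q ≤ ∑' i, g i ^ q := by
  rw [← ENNReal.le_rpow_inv_iff hq0]
  refine ENNReal.tsum_le_of_sum_range_le fun n => ?_
  rw [ENNReal.le_rpow_inv_iff hq0]
  exact (rpow_sum_le_sum_rpow hq0 hq1 _ g).trans (ENNReal.sum_le_tsum _)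

theorem mul_rpow_sum_le_mul_rpow_sum (hq : 0 < q) {S : Finset ℕ} {u v g : ℕ → ℝ≥0∞}
    {x y : ℝ≥0∞} (h : ∀ m ∈ S, y * u m ^ q ≤ x * v m ^ q) :
    y * (∑ m ∈ S, u m * g m) ^ q ≤ x * (∑ m ∈ S, v m * g m) ^ q := by
  have hq' : 0 ≤ q⁻¹ := inv_nonneg.2 hq.le
  have hpow : ∀ z w : ℝ≥0∞, z * w ^ q = (z ^ q⁻¹ * w) ^ q := fun z w => by
    rw [ENNReal.mul_rpow_of_nonneg _ _ hq.le, ENNReal.rpow_inv_rpow hq.ne']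
  rw [hpow, hpow, mul_sum, mul_sum]
  gcongr ?_ ^ _
  refine sum_le_sum fun m hm => ?_
  have hm := ENNReal.rpow_le_rpow (h m hm) hq'
  rw [hpow, hpow, ENNReal.rpow_rpow_inv hq.ne', ENNReal.rpow_rpow_inv hq.ne'] at hm
  calc y ^ q⁻¹ * (u m * g m) = y ^ q⁻¹ * u m * g m := (mul_assoc _ _ _).symm
    _ ≤ x ^ q⁻¹ * v m * g m := by gcongr
    _ = x ^ q⁻¹ * (v m * g m) := mul_assoc _ _ _

theorem tsum_eq_tsum_sum_Ico {ν : ℕ → ℕ} (hν : StrictMono ν) (hν0 : ν 0 = 0) (h : ℕ → ℝ≥0∞) :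
    ∑' n, h n = ∑' k, ∑ m ∈ Ico (ν k) (ν (k+1)), h m := by
  have hblocks : ∀ K, ∑ k ∈ range K, ∑ m ∈ Ico (ν k) (ν (k+1)), h m = ∑ m ∈ range (ν K), h m := by
    intro K
    induction K with
    | zero => simp [hν0]
    | succ K ih => rw [sum_range_succ, ih, sum_range_add_sum_Ico _ (hν.monotone K.le_succ)]
  refine le_antisymm (ENNReal.tsum_le_of_sum_range_le fun N => ?_)
    (ENNReal.tsum_le_of_sum_range_le fun K => ?_)
  · calc ∑ m ∈ range N, h m ≤ ∑ m ∈ range (ν N), h m :=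
          sum_le_sum_of_subset (range_subset_range.2 hν.le_apply)
      _ ≤ _ := by rw [← hblocks]; exact ENNReal.sum_le_tsum _
  · rw [hblocks]
    exact ENNReal.sum_le_tsum _

/-- `k - 1` truncates: the term `k = 0` is the empty block `Ico (ν 0) (ν 0)`. -/
theorem tsum_sum_Ico_pred {ν : ℕ → ℕ} (hν : StrictMono ν) (hν0 : ν 0 = 0) (h : ℕ → ℝ≥0∞) :
    ∑' k, ∑ m ∈ Ico (ν (k-1)) (ν k), h m = ∑' n, h n := by
  rw [tsum_eq_zero_add' ENNReal.summable, tsum_eq_tsum_sum_Ico hν hν0 h]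
  simp

theorem tsum_sum_Ico_succ_le {ν : ℕ → ℕ} (hν : StrictMono ν) (hν0 : ν 0 = 0) (h : ℕ → ℝ≥0∞) :
    ∑' k, ∑ m ∈ Ico (ν (k+1)) (ν (k+1+1)), h m ≤ ∑' n, h n := by
  rw [tsum_eq_tsum_sum_Ico hν hν0 h]
  exact ENNReal.tsum_comp_le_tsum_of_injective (add_left_injective 1)
    fun k => ∑ m ∈ Ico (ν k) (ν (k+1)), h m

theorem le_inv_one_sub_mul_of_le_add_mul {X Y ε : ℝ≥0∞} (hX : X ≠ ⊤) (hε : ε < 1)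
    (h : X ≤ Y + ε * X) : X ≤ (1 - ε)⁻¹ * Y := by
  rw [← ENNReal.mul_le_iff_le_inv (tsub_pos_of_lt hε).ne' (ENNReal.sub_ne_top ENNReal.one_ne_top),
    ENNReal.sub_mul fun _ _ => hX, one_mul]
  exact tsub_le_iff_right.2 h

theorem inv_le_two_mul_inv {x y : ℝ≥0∞} (h : x ≤ 2 * y) : y⁻¹ ≤ 2 * x⁻¹ :=
  calc y⁻¹ = 2 * (2 * y)⁻¹ := by
        rw [ENNReal.mul_inv (by simp) (by simp), ← mul_assoc,
          ENNReal.mul_inv_cancel (by simp) (by simp), one_mul]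
    _ ≤ 2 * x⁻¹ := by gcongr

theorem inv_rpow_add_le_two_mul_inv (hq : 0 ≤ q) (x y : ℝ≥0∞) :
    ((x + y) ^ q)⁻¹ ≤ 2 * (x ^ q + y ^ q)⁻¹ :=
  inv_le_two_mul_inv <| by
    rw [two_mul]
    gcongr
    exacts [le_self_add, le_add_self]

theorem two_inv_mul_inv_le_inv_add {x y z : ℝ≥0∞} (hx : x ≤ z) (hy : y ≤ z) :
    2⁻¹ * z⁻¹ ≤ (x + y)⁻¹ := by
  rw [← ENNReal.mul_inv (by simp) (by simp), ENNReal.inv_le_inv, two_mul]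
  gcongr

theorem two_inv_mul_mul_inv_mul_inv_le_inv_add {s x y : ℝ≥0∞} (hx : s ≤ x) (hy : s ≤ y) :
    2⁻¹ * (s * y⁻¹ * x⁻¹) ≤ (x + y)⁻¹ := by
  have hle : ∀ {z w : ℝ≥0∞}, s ≤ z → s * z⁻¹ * w⁻¹ ≤ w⁻¹ := fun {z w} hz =>
    calc s * z⁻¹ * w⁻¹ ≤ 1 * w⁻¹ :=
          mul_le_mul_left ((mul_le_mul_left hz _).trans (ENNReal.mul_inv_le_one _)) _
      _ = w⁻¹ := one_mul _
  rcases le_total x y with hxy | hxy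
  · calc 2⁻¹ * (s * y⁻¹ * x⁻¹) ≤ 2⁻¹ * y⁻¹ := by rw [mul_right_comm]; gcongr; exact hle hx
      _ ≤ (x + y)⁻¹ := two_inv_mul_inv_le_inv_add hxy le_rfl
  · calc 2⁻¹ * (s * y⁻¹ * x⁻¹) ≤ 2⁻¹ * x⁻¹ := by gcongr; exact hle hy
      _ ≤ (x + y)⁻¹ := two_inv_mul_inv_le_inv_add le_rfl hxy

theorem div_add_le_div_add {c x y : ℝ≥0∞} (hc0 : c ≠ 0) (hct : c ≠ ⊤) (hy : y ≠ ⊤)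
    (hxy : x ≤ y) : x / (c + x) ≤ y / (c + y) := by
  have hx : x ≠ ⊤ := ne_top_of_le_ne_top hy hxy
  have hcx : (c + x) * (c + x)⁻¹ = 1 := ENNReal.mul_inv_cancel (by simp [hc0]) (by simp [hct, hx])
  have hcy : (c + y) * (c + y)⁻¹ = 1 := ENNReal.mul_inv_cancel (by simp [hc0]) (by simp [hct, hy])
  have hcross : x * (c + y) ≤ y * (c + x) := by
    rw [mul_add, mul_add, mul_comm x c, mul_comm y c, mul_comm x y]
    gcongr
  simp only [div_eq_mul_inv]
  calc x * (c + x)⁻¹ = x * (c + y) * ((c + x)⁻¹ * (c + y)⁻¹) := by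
        rw [mul_comm (c + x)⁻¹, mul_assoc, ← mul_assoc (c + y), hcy, one_mul]
    _ ≤ y * (c + x) * ((c + x)⁻¹ * (c + y)⁻¹) := by gcongr
    _ = y * (c + y)⁻¹ := by rw [mul_assoc, ← mul_assoc (c + x), hcx, one_mul]

end Inequalities

/-- With `a n = α (n+1)` and `E n = (n+1)^{pr}`, `weight a E m` is `omegaBar p r α (m+1)`: the
development is indexed from `0`, and `μ k = ν k + 1`. -/
noncomputable def weight (a E : ℕ → ℝ≥0∞) (m : ℕ) : ℝ≥0∞ := ∑' n, a n / (E n + E m)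

section Weight

variable {a E : ℕ → ℝ≥0∞}

theorem weight_antitone (hE : Monotone E) : Antitone (weight a E) := fun _ _ h =>
  ENNReal.tsum_le_tsum fun _ => ENNReal.div_le_div_left (by gcongr; exact hE h) _

theorem weight_mul_eq (m : ℕ) : weight a E m * E m = ∑' n, a n * (E m / (E n + E m)) := by
  rw [weight, ← ENNReal.tsum_mul_right]
  exact tsum_congr fun n => by simp only [div_eq_mul_inv]; ring

theorem monotone_weight_mul (hE : Monotone E) (hE0 : ∀ n, E n ≠ 0) (hEt : ∀ n, E n ≠ ⊤) :
    Monotone fun m => weight a E m * E m := fun m m' h => by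
  simp only [weight_mul_eq]
  exact ENNReal.tsum_le_tsum fun n =>
    mul_le_mul_right (div_add_le_div_add (hE0 n) (hEt n) (hEt m') (hE h)) _

theorem sum_range_le_two_mul_weight_mul (hE : Monotone E) (hE0 : ∀ n, E n ≠ 0)
    (hEt : ∀ n, E n ≠ ⊤) (m : ℕ) : ∑ n ∈ range m, a n ≤ 2 * (weight a E m * E m) := by
  rw [weight_mul_eq, ← ENNReal.tsum_mul_left]
  refine le_trans (sum_le_sum fun n hn => ?_) (ENNReal.sum_le_tsum _)
  have hone : 1 ≤ 2 * (E m / (E n + E m)) := by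
    rw [← mul_div_assoc, ENNReal.le_div_iff_mul_le (by simp [hE0]) (by simp [hEt]), one_mul,
      two_mul]
    gcongr
    exact hE (mem_range.1 hn).le
  calc a n = a n * 1 := (mul_one _).symm
    _ ≤ a n * (2 * (E m / (E n + E m))) := by gcongr
    _ = 2 * (a n * (E m / (E n + E m))) := mul_left_comm _ _ _

/-- The terms of `weight a E m * E m` are at most `a n` for `n < t`, at most `E m * a n / E n` for
`t ≤ n < u`, and at most `2 * E m * a n / (E n + E u)` for `u ≤ n`. -/
theorem weight_mul_le (hE : Monotone E) (m t u : ℕ) :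
    weight a E m * E m ≤ ∑ n ∈ range t, a n + E m * ∑ n ∈ Ico t u, a n / E n +
      2 * (E m * weight a E u) := by
  have hsplit : ∀ n, a n * (E m / (E n + E m)) ≤ (range t : Set ℕ).indicator a n +
      E m * (Ico t u : Set ℕ).indicator (fun n => a n / E n) n +
      2 * (E m * (a n / (E n + E u))) := fun n => by
    have hfrac : a n * (E m / (E n + E m)) ≤ E m * (a n / E n) := by
      calc a n * (E m / (E n + E m)) = E m * (a n / (E n + E m)) := by
            simp only [div_eq_mul_inv]; ring
        _ ≤ E m * (a n / E n) := by gcongr; exact le_self_add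
    by_cases hnt : n < t
    · refine le_add_right (le_add_right ?_)
      rw [Set.indicator_of_mem (by simpa using hnt)]
      calc a n * (E m / (E n + E m)) ≤ a n * 1 := by
            gcongr; exact ENNReal.div_le_of_le_mul (by rw [one_mul]; exact le_add_self)
        _ = a n := mul_one _
    by_cases hnu : n < u
    · refine le_add_right (le_add_left ?_)
      rw [Set.indicator_of_mem (by simp; omega)]
      exact hfrac
    · refine le_add_left (hfrac.trans ?_)
      calc E m * (a n / E n) = E m * (a n * (E n)⁻¹) := by rw [div_eq_mul_inv]
        _ ≤ E m * (a n * (2 * (E n + E u)⁻¹)) := by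
            gcongr
            exact inv_le_two_mul_inv (by rw [two_mul]; gcongr; exact hE (by omega))
        _ = 2 * (E m * (a n / (E n + E u))) := by simp only [div_eq_mul_inv]; ring
  rw [weight_mul_eq, weight, sum_eq_tsum_indicator, sum_eq_tsum_indicator, ← ENNReal.tsum_mul_left,
    ← ENNReal.tsum_mul_left, ← ENNReal.tsum_mul_left, ← ENNReal.tsum_add, ← ENNReal.tsum_add]
  exact ENNReal.tsum_le_tsum hsplit

end Weight

section Localization

variable {a E : ℕ → ℝ≥0∞} {ν : ℕ → ℕ} {ε : ℝ≥0∞}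

theorem sum_range_le_sum_Ico_pred_add (hE : Monotone E) (hE0 : ∀ n, E n ≠ 0)
    (hEt : ∀ n, E n ≠ ⊤) (hν : Monotone ν) (hν0 : ν 0 = 0)
    (hinc : ∀ k, weight a E (ν k) * E (ν k) ≤ ε * (weight a E (ν (k+1)) * E (ν (k+1))))
    (k : ℕ) :
    ∑ n ∈ range (ν k), a n ≤
      ∑ n ∈ Ico (ν (k-1)) (ν k), a n + 2 * ε * (weight a E (ν k) * E (ν k)) := by
  cases k with
  | zero => simp [hν0]
  | succ k =>
    rw [← sum_range_add_sum_Ico _ (hν k.le_succ), add_comm, Nat.add_sub_cancel]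
    refine add_le_add le_rfl ?_
    calc ∑ n ∈ range (ν k), a n ≤ 2 * (weight a E (ν k) * E (ν k)) :=
          sum_range_le_two_mul_weight_mul hE hE0 hEt _
      _ ≤ 2 * (ε * (weight a E (ν (k+1)) * E (ν (k+1)))) := mul_le_mul_right (hinc k) 2
      _ = 2 * ε * (weight a E (ν (k+1)) * E (ν (k+1))) := (mul_assoc _ _ _).symm

theorem weight_mul_le_of_block_start (hE : Monotone E) (hE0 : ∀ n, E n ≠ 0)
    (hEt : ∀ n, E n ≠ ⊤) (hν : Monotone ν) (hν0 : ν 0 = 0)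
    (hdec : ∀ k, weight a E (ν (k+1)) ≤ ε * weight a E (ν k))
    (hinc : ∀ k, weight a E (ν k) * E (ν k) ≤ ε * (weight a E (ν (k+1)) * E (ν (k+1))))
    (hε : 4 * ε < 1) {k : ℕ} (hw : weight a E (ν k) ≠ ⊤) :
    weight a E (ν k) * E (ν k) ≤ (1 - 4 * ε)⁻¹ *
      (∑ n ∈ Ico (ν (k-1)) (ν k), a n + E (ν k) * ∑ n ∈ Ico (ν k) (ν (k+1)), a n / E n) := by
  refine le_inv_one_sub_mul_of_le_add_mul (ENNReal.mul_ne_top hw (hEt _)) hε ?_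
  have htail : E (ν k) * weight a E (ν (k+1)) ≤ ε * (weight a E (ν k) * E (ν k)) :=
    calc E (ν k) * weight a E (ν (k+1)) ≤ E (ν k) * (ε * weight a E (ν k)) := by
          gcongr; exact hdec k
      _ = ε * (weight a E (ν k) * E (ν k)) := by ring
  calc weight a E (ν k) * E (ν k)
      ≤ ∑ n ∈ range (ν k), a n + E (ν k) * ∑ n ∈ Ico (ν k) (ν (k+1)), a n / E n +
          2 * (E (ν k) * weight a E (ν (k+1))) := weight_mul_le hE _ _ _
    _ ≤ (∑ n ∈ Ico (ν (k-1)) (ν k), a n + 2 * ε * (weight a E (ν k) * E (ν k))) +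
          E (ν k) * ∑ n ∈ Ico (ν k) (ν (k+1)), a n / E n +
          2 * (ε * (weight a E (ν k) * E (ν k))) := by
        gcongr
        exact sum_range_le_sum_Ico_pred_add hE hE0 hEt hν hν0 hinc k
    _ = _ := by ring

/-- The doubling hypothesis `hdbl` bridges the last index `ν (k+1) - 1` of a block and the first
index of the next one, where `weight_mul_le_of_block_start` applies. -/
theorem weight_mul_le_of_block_end (hE : Monotone E) (hE0 : ∀ n, E n ≠ 0)
    (hEt : ∀ n, E n ≠ ⊤) (hν : StrictMono ν) (hν0 : ν 0 = 0)
    (hdec : ∀ k, weight a E (ν (k+1)) ≤ ε * weight a E (ν k))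
    (hinc : ∀ k, weight a E (ν k) * E (ν k) ≤ ε * (weight a E (ν (k+1)) * E (ν (k+1))))
    (hε : 4 * ε < 1) {c₂ : ℝ≥0∞} (hdbl : ∀ m, E (m+1) ≤ c₂ * E m) {k : ℕ}
    (hw : weight a E (ν (k+1)) ≠ ⊤) :
    weight a E (ν (k+1) - 1) * E (ν (k+1) - 1) ≤ (1 + 3 * (1 - 4 * ε)⁻¹) *
      (∑ n ∈ Ico (ν k) (ν (k+1)), a n +
        c₂ * (E (ν (k+1) - 1) * ∑ n ∈ Ico (ν (k+1)) (ν (k+1+1)), a n / E n)) := by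
  have hm' : ν (k+1) - 1 + 1 = ν (k+1) := by have := hν k.lt_add_one; omega
  set m' := ν (k+1) - 1
  set X := weight a E (ν (k+1)) * E (ν (k+1))
  set A := ∑ n ∈ Ico (ν k) (ν (k+1)), a n
  set B := ∑ n ∈ Ico (ν (k+1)) (ν (k+1+1)), a n / E n
  have hX : X ≤ (1 - 4 * ε)⁻¹ * (A + c₂ * (E m' * B)) := by
    have h := weight_mul_le_of_block_start hE hE0 hEt hν.monotone hν0 hdec hinc hε hw
    rw [Nat.add_sub_cancel] at h
    refine h.trans (mul_le_mul_right (add_le_add le_rfl ?_) _)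
    calc E (ν (k+1)) * B ≤ c₂ * E m' * B := by gcongr; exact hm' ▸ hdbl m'
      _ = c₂ * (E m' * B) := mul_assoc _ _ _
  have hH := sum_range_le_sum_Ico_pred_add hE hE0 hEt hν.monotone hν0 hinc (k+1)
  rw [Nat.add_sub_cancel] at hH
  have h2ε : 2 * ε + 2 ≤ 3 :=
    calc 2 * ε + 2 ≤ 4 * ε + 2 := by gcongr; norm_num
      _ ≤ 1 + 2 := by gcongr
      _ = 3 := by norm_num
  calc weight a E m' * E m'
      ≤ ∑ n ∈ range (ν (k+1)), a n + E m' * ∑ n ∈ Ico (ν (k+1)) (ν (k+1)), a n / E n +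
          2 * (E m' * weight a E (ν (k+1))) := weight_mul_le hE _ _ _
    _ ≤ (A + 2 * ε * X) + 0 + 2 * X := by
        gcongr
        · simp
        · calc E m' * weight a E (ν (k+1)) ≤ E (ν (k+1)) * weight a E (ν (k+1)) := by
                gcongr; exact hE (Nat.sub_le _ _)
            _ = X := mul_comm _ _
    _ = A + (2 * ε + 2) * X := by ring
    _ ≤ A + 3 * ((1 - 4 * ε)⁻¹ * (A + c₂ * (E m' * B))) := by gcongr
    _ ≤ (A + c₂ * (E m' * B)) + 3 * ((1 - 4 * ε)⁻¹ * (A + c₂ * (E m' * B))) :=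
        add_le_add le_self_add le_rfl
    _ = _ := by ring

end Localization

/-- `D` is the scale of the kernel `1 / (D j + D n)` and `E = D ^ q` the scale of the weights;
in the theorem `D n = (n+1)^{pr/q}` and `E n = (n+1)^{pr}`. -/
structure KernelScale (q : ℝ) (D E : ℕ → ℝ≥0∞) : Prop where
  pos : 0 < q
  mono : Monotone D
  ne_zero : ∀ n, D n ≠ 0
  ne_top : ∀ n, D n ≠ ⊤
  rpow_eq : ∀ n, D n ^ q = E n

namespace KernelScale

variable {q : ℝ} {D E : ℕ → ℝ≥0∞}

theorem mono_pow (h : KernelScale q D E) : Monotone E := fun m n hmn => by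
  rw [← h.rpow_eq, ← h.rpow_eq]
  exact ENNReal.rpow_le_rpow (h.mono hmn) h.pos.le

theorem pow_ne_zero (h : KernelScale q D E) (n : ℕ) : E n ≠ 0 := by
  rw [← h.rpow_eq]
  exact (ENNReal.rpow_pos (pos_iff_ne_zero.2 (h.ne_zero n)) (h.ne_top n)).ne'

theorem pow_ne_top (h : KernelScale q D E) (n : ℕ) : E n ≠ ⊤ := by
  rw [← h.rpow_eq]
  exact ENNReal.rpow_ne_top_of_nonneg h.pos.le (h.ne_top n)

theorem inv_rpow_eq (h : KernelScale q D E) (n : ℕ) : (D n)⁻¹ ^ q = (E n)⁻¹ := by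
  rw [ENNReal.inv_rpow, h.rpow_eq]

end KernelScale

noncomputable def kernelSum (D g : ℕ → ℝ≥0∞) (n : ℕ) : ℝ≥0∞ := ∑' j, g j / (D j + D n)

section Kernel

variable {q : ℝ} {a g D E : ℕ → ℝ≥0∞}

theorem tsum_mul_rpow_sum_le_weight (h : KernelScale q D E) {S : Finset ℕ} {s : ℕ}
    (hS : ∀ m ∈ S, s ≤ m) :
    ∑' n, a n * (∑ m ∈ S, g m / (D m + D n)) ^ q ≤ 2 * weight a E s * (∑ m ∈ S, g m) ^ q := by
  have hn : ∀ n, (∑ m ∈ S, g m / (D m + D n)) ^ q ≤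
      2 * (E n + E s)⁻¹ * (∑ m ∈ S, g m) ^ q := fun n =>
    calc (∑ m ∈ S, g m / (D m + D n)) ^ q ≤ ((D s + D n)⁻¹ * ∑ m ∈ S, g m) ^ q := by
          refine ENNReal.rpow_le_rpow ?_ h.pos.le
          rw [mul_sum]
          refine sum_le_sum fun m hm => ?_
          rw [ENNReal.div_eq_inv_mul]
          gcongr
          exact h.mono (hS m hm)
      _ = ((D s + D n) ^ q)⁻¹ * (∑ m ∈ S, g m) ^ q := by
          rw [ENNReal.mul_rpow_of_nonneg _ _ h.pos.le, ENNReal.inv_rpow]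
      _ ≤ 2 * (E n + E s)⁻¹ * (∑ m ∈ S, g m) ^ q := by
          gcongr
          rw [add_comm (E n), ← h.rpow_eq, ← h.rpow_eq]
          exact inv_rpow_add_le_two_mul_inv h.pos.le _ _
  calc ∑' n, a n * (∑ m ∈ S, g m / (D m + D n)) ^ q
      ≤ ∑' n, a n * (2 * (E n + E s)⁻¹ * (∑ m ∈ S, g m) ^ q) :=
        ENNReal.tsum_le_tsum fun n => by gcongr; exact hn n
    _ = 2 * weight a E s * (∑ m ∈ S, g m) ^ q := by
        rw [weight, ← ENNReal.tsum_mul_left, ← ENNReal.tsum_mul_right]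
        exact tsum_congr fun n => by simp only [div_eq_mul_inv]; ring

theorem tsum_mul_rpow_sum_le_weight_mul (h : KernelScale q D E) {S : Finset ℕ} {t : ℕ}
    (hS : ∀ m ∈ S, m ≤ t) :
    ∑' n, a n * (∑ m ∈ S, g m / (D m + D n)) ^ q ≤
      2 * (weight a E t * E t) * (∑ m ∈ S, (D m)⁻¹ * g m) ^ q := by
  have hn : ∀ n, (∑ m ∈ S, g m / (D m + D n)) ^ q ≤
      2 * (E t * (E n + E t)⁻¹) * (∑ m ∈ S, (D m)⁻¹ * g m) ^ q := fun n =>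
    calc (∑ m ∈ S, g m / (D m + D n)) ^ q
        ≤ (D t / (D n + D t) * ∑ m ∈ S, (D m)⁻¹ * g m) ^ q := by
          refine ENNReal.rpow_le_rpow ?_ h.pos.le
          rw [mul_sum]
          refine sum_le_sum fun m hm => ?_
          calc g m / (D m + D n) = D m / (D n + D m) * ((D m)⁻¹ * g m) := by
                rw [add_comm (D n)]
                simp only [div_eq_mul_inv]
                rw [show D m * (D m + D n)⁻¹ * ((D m)⁻¹ * g m) =
                    g m * (D m + D n)⁻¹ * (D m * (D m)⁻¹) by ring,
                  ENNReal.mul_inv_cancel (h.ne_zero m) (h.ne_top m), mul_one]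
            _ ≤ D t / (D n + D t) * ((D m)⁻¹ * g m) := by
                gcongr ?_ * _
                exact div_add_le_div_add (h.ne_zero n) (h.ne_top n) (h.ne_top t) (h.mono (hS m hm))
      _ = E t * ((D n + D t) ^ q)⁻¹ * (∑ m ∈ S, (D m)⁻¹ * g m) ^ q := by
          rw [ENNReal.mul_rpow_of_nonneg _ _ h.pos.le, ENNReal.div_rpow_of_nonneg _ _ h.pos.le,
            h.rpow_eq, div_eq_mul_inv]
      _ ≤ E t * (2 * (E n + E t)⁻¹) * (∑ m ∈ S, (D m)⁻¹ * g m) ^ q := by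
          gcongr
          rw [← h.rpow_eq, ← h.rpow_eq]
          exact inv_rpow_add_le_two_mul_inv h.pos.le _ _
      _ = 2 * (E t * (E n + E t)⁻¹) * (∑ m ∈ S, (D m)⁻¹ * g m) ^ q := by ring
  calc ∑' n, a n * (∑ m ∈ S, g m / (D m + D n)) ^ q
      ≤ ∑' n, a n * (2 * (E t * (E n + E t)⁻¹) * (∑ m ∈ S, (D m)⁻¹ * g m) ^ q) :=
        ENNReal.tsum_le_tsum fun n => by gcongr; exact hn n
    _ = 2 * (weight a E t * E t) * (∑ m ∈ S, (D m)⁻¹ * g m) ^ q := by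
        rw [weight, ← ENNReal.tsum_mul_right, ← ENNReal.tsum_mul_left, ← ENNReal.tsum_mul_right]
        exact tsum_congr fun n => by simp only [div_eq_mul_inv]; ring

theorem sum_mul_rpow_le_sum_kernelSum (hq : 0 ≤ q) {S T : Finset ℕ} {ρ c : ℕ → ℝ≥0∞}
    (hρ : ∀ n ∈ T, ∀ m ∈ S, 2⁻¹ * (ρ n * c m) ≤ (D m + D n)⁻¹) :
    (∑ n ∈ T, a n * ρ n ^ q) * (∑ m ∈ S, c m * g m) ^ q ≤
      2 ^ q * ∑ n ∈ T, a n * kernelSum D g n ^ q := by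
  rw [sum_mul, mul_sum]
  refine sum_le_sum fun n hn => ?_
  have hF : 2⁻¹ * (ρ n * ∑ m ∈ S, c m * g m) ≤ kernelSum D g n :=
    calc 2⁻¹ * (ρ n * ∑ m ∈ S, c m * g m) = ∑ m ∈ S, 2⁻¹ * (ρ n * c m) * g m := by
          rw [mul_sum, mul_sum]
          exact sum_congr rfl fun m _ => by ring
      _ ≤ ∑ m ∈ S, g m / (D m + D n) := sum_le_sum fun m hm => by
          rw [div_eq_mul_inv, mul_comm (g m)]
          exact mul_le_mul_left (hρ n hn m hm) _
      _ ≤ kernelSum D g n := ENNReal.sum_le_tsum _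
  have h2 : (2 : ℝ≥0∞) ^ q * 2⁻¹ ^ q = 1 := by
    rw [← ENNReal.mul_rpow_of_nonneg _ _ hq, ENNReal.mul_inv_cancel (by simp) (by simp),
      ENNReal.one_rpow]
  calc a n * ρ n ^ q * (∑ m ∈ S, c m * g m) ^ q
      = 2 ^ q * 2⁻¹ ^ q * (a n * ρ n ^ q * (∑ m ∈ S, c m * g m) ^ q) := by rw [h2, one_mul]
    _ = 2 ^ q * (a n * (2⁻¹ * (ρ n * ∑ m ∈ S, c m * g m)) ^ q) := by
        rw [ENNReal.mul_rpow_of_nonneg _ _ hq, ENNReal.mul_rpow_of_nonneg _ _ hq]; ring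
    _ ≤ 2 ^ q * (a n * kernelSum D g n ^ q) := by gcongr

theorem sum_mul_rpow_sum_inv_mul_le (h : KernelScale q D E) {S T : Finset ℕ}
    (hTS : ∀ n ∈ T, ∀ m ∈ S, n ≤ m) :
    (∑ n ∈ T, a n) * (∑ m ∈ S, (D m)⁻¹ * g m) ^ q ≤
      2 ^ q * ∑ n ∈ T, a n * kernelSum D g n ^ q := by
  have htest := sum_mul_rpow_le_sum_kernelSum h.pos.le (a := a) (g := g) (ρ := fun _ => 1)
    (c := fun m => (D m)⁻¹) fun n hn m hm => by
      rw [one_mul]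
      exact two_inv_mul_inv_le_inv_add le_rfl (h.mono (hTS n hn m hm))
  simpa only [ENNReal.one_rpow, mul_one] using htest

theorem mul_sum_div_mul_rpow_sum_inv_mul_le (h : KernelScale q D E) {S T : Finset ℕ} {s : ℕ}
    (hT : ∀ n ∈ T, s ≤ n) (hS : ∀ m ∈ S, s ≤ m) :
    E s * (∑ n ∈ T, a n / E n) * (∑ m ∈ S, (D m)⁻¹ * g m) ^ q ≤
      2 ^ q * ∑ n ∈ T, a n * kernelSum D g n ^ q := by
  have htest := sum_mul_rpow_le_sum_kernelSum h.pos.le (a := a) (g := g)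
    (ρ := fun n => D s * (D n)⁻¹) (c := fun m => (D m)⁻¹) fun n hn m hm =>
      two_inv_mul_mul_inv_mul_inv_le_inv_add (h.mono (hS m hm)) (h.mono (hT n hn))
  convert htest using 2
  rw [mul_sum]
  refine sum_congr rfl fun n _ => ?_
  rw [ENNReal.mul_rpow_of_nonneg _ _ h.pos.le, h.rpow_eq, h.inv_rpow_eq, div_eq_mul_inv]
  ring

theorem sum_mul_inv_mul_rpow_sum_le (h : KernelScale q D E) {S T : Finset ℕ} {t : ℕ}
    (hT : ∀ n ∈ T, n ≤ t) (hS : ∀ m ∈ S, m ≤ t) :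
    (∑ n ∈ T, a n) * (E t)⁻¹ * (∑ m ∈ S, g m) ^ q ≤
      2 ^ q * ∑ n ∈ T, a n * kernelSum D g n ^ q := by
  have htest := sum_mul_rpow_le_sum_kernelSum h.pos.le (a := a) (g := g)
    (ρ := fun _ => (D t)⁻¹) (c := fun _ => 1) fun n hn m hm => by
      rw [mul_one]
      exact two_inv_mul_inv_le_inv_add (h.mono (hS m hm)) (h.mono (hT n hn))
  simpa only [h.inv_rpow_eq, ← sum_mul, one_mul] using htest

theorem sum_div_mul_rpow_sum_le (h : KernelScale q D E) {S T : Finset ℕ}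
    (hTS : ∀ n ∈ T, ∀ m ∈ S, m ≤ n) :
    (∑ n ∈ T, a n / E n) * (∑ m ∈ S, g m) ^ q ≤ 2 ^ q * ∑ n ∈ T, a n * kernelSum D g n ^ q := by
  have htest := sum_mul_rpow_le_sum_kernelSum h.pos.le (a := a) (g := g)
    (ρ := fun n => (D n)⁻¹) (c := fun _ => 1) fun n hn m hm => by
      rw [mul_one]
      exact two_inv_mul_inv_le_inv_add (h.mono (hTS n hn m hm)) le_rfl
  simpa only [h.inv_rpow_eq, ← div_eq_mul_inv, one_mul] using htest

theorem tsum_mul_rpow_sum_le_of_weight_le (h : KernelScale q D E) {c : ℝ≥0∞} {S : Finset ℕ}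
    {s : ℕ} (hS : ∀ m ∈ S, s ≤ m ∧ weight a E s ≤ c * weight a E m) :
    ∑' n, a n * (∑ m ∈ S, g m / (D m + D n)) ^ q ≤
      2 * c * (∑ m ∈ S, weight a E m ^ (1/q) * g m) ^ q := by
  have hcmp := mul_rpow_sum_le_mul_rpow_sum h.pos (S := S) (g := g) (y := weight a E s) (x := c)
    (u := fun _ => 1) (v := fun m => weight a E m ^ (1/q)) fun m hm => by
      rw [ENNReal.one_rpow, mul_one, one_div, ENNReal.rpow_inv_rpow h.pos.ne']
      exact (hS m hm).2
  simp only [one_mul] at hcmp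
  calc _ ≤ 2 * weight a E s * (∑ m ∈ S, g m) ^ q :=
        tsum_mul_rpow_sum_le_weight h fun m hm => (hS m hm).1
    _ = 2 * (weight a E s * (∑ m ∈ S, g m) ^ q) := mul_assoc _ _ _
    _ ≤ 2 * (c * (∑ m ∈ S, weight a E m ^ (1/q) * g m) ^ q) := mul_le_mul_right hcmp 2
    _ = 2 * c * (∑ m ∈ S, weight a E m ^ (1/q) * g m) ^ q := (mul_assoc _ _ _).symm

theorem tsum_mul_rpow_sum_le_of_weight_mul_le (h : KernelScale q D E) {C : ℝ≥0∞}
    {S : Finset ℕ} {t : ℕ} (hS : ∀ m ∈ S, m ≤ t ∧ weight a E t * E t ≤ C * (weight a E m * E m)) :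
    ∑' n, a n * (∑ m ∈ S, g m / (D m + D n)) ^ q ≤
      2 * C * (∑ m ∈ S, weight a E m ^ (1/q) * g m) ^ q := by
  have hcmp := mul_rpow_sum_le_mul_rpow_sum h.pos (S := S) (g := g) (y := weight a E t * E t)
    (x := C) (u := fun m => (D m)⁻¹) (v := fun m => weight a E m ^ (1/q)) fun m hm => by
      rw [h.inv_rpow_eq, one_div, ENNReal.rpow_inv_rpow h.pos.ne', ← div_eq_mul_inv,
        ENNReal.div_le_iff_le_mul (Or.inl (h.pow_ne_zero m)) (Or.inl (h.pow_ne_top m)), mul_assoc]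
      exact (hS m hm).2
  calc _ ≤ 2 * (weight a E t * E t) * (∑ m ∈ S, (D m)⁻¹ * g m) ^ q :=
        tsum_mul_rpow_sum_le_weight_mul h fun m hm => (hS m hm).1
    _ = 2 * (weight a E t * E t * (∑ m ∈ S, (D m)⁻¹ * g m) ^ q) := mul_assoc _ _ _
    _ ≤ 2 * (C * (∑ m ∈ S, weight a E m ^ (1/q) * g m) ^ q) := mul_le_mul_right hcmp 2
    _ = 2 * C * (∑ m ∈ S, weight a E m ^ (1/q) * g m) ^ q := (mul_assoc _ _ _).symm

end Kernel

section Blocks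

variable {q : ℝ} {a g D E : ℕ → ℝ≥0∞} {ν : ℕ → ℕ} {ε c C : ℝ≥0∞}

theorem tsum_mul_kernelSum_rpow_le (h : KernelScale q D E) (hq1 : q ≤ 1) (hν : StrictMono ν)
    (hν0 : ν 0 = 0)
    (hblock : ∀ k, weight a E (ν k) ≤ c * weight a E (ν (k+1) - 1) ∨
      weight a E (ν (k+1) - 1) * E (ν (k+1) - 1) ≤ C * (weight a E (ν k) * E (ν k))) :
    ∑' n, a n * kernelSum D g n ^ q ≤
      2 * (c + C) * ∑' k, (∑ m ∈ Ico (ν k) (ν (k+1)), weight a E m ^ (1/q) * g m) ^ q := by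
  have hk : ∀ k, ∑' n, a n * (∑ m ∈ Ico (ν k) (ν (k+1)), g m / (D m + D n)) ^ q ≤
      2 * (c + C) * (∑ m ∈ Ico (ν k) (ν (k+1)), weight a E m ^ (1/q) * g m) ^ q := fun k => by
    have hm : ∀ m ∈ Ico (ν k) (ν (k+1)), ν k ≤ m ∧ m ≤ ν (k+1) - 1 := fun m hm => by
      have := mem_Ico.1 hm; omega
    rcases hblock k with hI | hJ
    · refine (tsum_mul_rpow_sum_le_of_weight_le h fun m hm' => ⟨(hm m hm').1, hI.trans
        (mul_le_mul_right (weight_antitone h.mono_pow (hm m hm').2) c)⟩).trans ?_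
      gcongr
      exact le_self_add
    · refine (tsum_mul_rpow_sum_le_of_weight_mul_le h fun m hm' => ⟨(hm m hm').2, hJ.trans
        (mul_le_mul_right (monotone_weight_mul h.mono_pow h.pow_ne_zero h.pow_ne_top
          (hm m hm').1) C)⟩).trans ?_
      gcongr
      exact le_add_self
  calc ∑' n, a n * kernelSum D g n ^ q
      ≤ ∑' n, ∑' k, a n * (∑ m ∈ Ico (ν k) (ν (k+1)), g m / (D m + D n)) ^ q := by
        refine ENNReal.tsum_le_tsum fun n => ?_
        rw [ENNReal.tsum_mul_left, kernelSum, tsum_eq_tsum_sum_Ico hν hν0]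
        gcongr
        exact rpow_tsum_le_tsum_rpow h.pos hq1 _
    _ = ∑' k, ∑' n, a n * (∑ m ∈ Ico (ν k) (ν (k+1)), g m / (D m + D n)) ^ q :=
        ENNReal.tsum_comm
    _ ≤ ∑' k, 2 * (c + C) * (∑ m ∈ Ico (ν k) (ν (k+1)), weight a E m ^ (1/q) * g m) ^ q :=
        ENNReal.tsum_le_tsum hk
    _ = _ := ENNReal.tsum_mul_left

theorem rpow_sum_block_le_of_weight_mul_le (h : KernelScale q D E) (hν : StrictMono ν)
    (hν0 : ν 0 = 0) (hdec : ∀ k, weight a E (ν (k+1)) ≤ ε * weight a E (ν k))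
    (hinc : ∀ k, weight a E (ν k) * E (ν k) ≤ ε * (weight a E (ν (k+1)) * E (ν (k+1))))
    (hε : 4 * ε < 1) {k : ℕ} (hw : weight a E (ν k) ≠ ⊤)
    (hk : weight a E (ν (k+1) - 1) * E (ν (k+1) - 1) ≤ C * (weight a E (ν k) * E (ν k))) :
    (∑ m ∈ Ico (ν k) (ν (k+1)), weight a E m ^ (1/q) * g m) ^ q ≤
      C * (1 - 4 * ε)⁻¹ * 2 ^ q * (∑ n ∈ Ico (ν (k-1)) (ν k), a n * kernelSum D g n ^ q +
        ∑ n ∈ Ico (ν k) (ν (k+1)), a n * kernelSum D g n ^ q) := by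
  set X := weight a E (ν k) * E (ν k)
  set G := ∑ m ∈ Ico (ν k) (ν (k+1)), (D m)⁻¹ * g m
  have hS : (∑ m ∈ Ico (ν k) (ν (k+1)), weight a E m ^ (1/q) * g m) ^ q ≤ C * X * G ^ q := by
    have hcmp := mul_rpow_sum_le_mul_rpow_sum h.pos (S := Ico (ν k) (ν (k+1))) (g := g)
      (y := 1) (x := C * X) (u := fun m => weight a E m ^ (1/q)) (v := fun m => (D m)⁻¹)
      fun m hm => by
        rw [one_mul, one_div, ENNReal.rpow_inv_rpow h.pos.ne', h.inv_rpow_eq, ← div_eq_mul_inv,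
          ENNReal.le_div_iff_mul_le (Or.inl (h.pow_ne_zero m)) (Or.inl (h.pow_ne_top m))]
        refine (monotone_weight_mul h.mono_pow h.pow_ne_zero h.pow_ne_top ?_).trans hk
        have := (mem_Ico.1 hm).2
        omega
    rwa [one_mul] at hcmp
  calc (∑ m ∈ Ico (ν k) (ν (k+1)), weight a E m ^ (1/q) * g m) ^ q ≤ C * X * G ^ q := hS
    _ ≤ C * ((1 - 4 * ε)⁻¹ * (∑ n ∈ Ico (ν (k-1)) (ν k), a n +
          E (ν k) * ∑ n ∈ Ico (ν k) (ν (k+1)), a n / E n)) * G ^ q := by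
        gcongr
        exact weight_mul_le_of_block_start h.mono_pow h.pow_ne_zero h.pow_ne_top hν.monotone hν0
          hdec hinc hε hw
    _ = C * (1 - 4 * ε)⁻¹ * ((∑ n ∈ Ico (ν (k-1)) (ν k), a n) * G ^ q +
          E (ν k) * (∑ n ∈ Ico (ν k) (ν (k+1)), a n / E n) * G ^ q) := by ring
    _ ≤ C * (1 - 4 * ε)⁻¹ * (2 ^ q * ∑ n ∈ Ico (ν (k-1)) (ν k), a n * kernelSum D g n ^ q +
          2 ^ q * ∑ n ∈ Ico (ν k) (ν (k+1)), a n * kernelSum D g n ^ q) := by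
        refine mul_le_mul_right (add_le_add ?_ ?_) _
        · exact sum_mul_rpow_sum_inv_mul_le h fun n hn m hm =>
            (mem_Ico.1 hn).2.le.trans (mem_Ico.1 hm).1
        · exact mul_sum_div_mul_rpow_sum_inv_mul_le h (fun n hn => (mem_Ico.1 hn).1)
            fun m hm => (mem_Ico.1 hm).1
    _ = _ := by ring

theorem rpow_sum_block_le_of_weight_le (h : KernelScale q D E) (hν : StrictMono ν)
    (hν0 : ν 0 = 0) (hdec : ∀ k, weight a E (ν (k+1)) ≤ ε * weight a E (ν k))
    (hinc : ∀ k, weight a E (ν k) * E (ν k) ≤ ε * (weight a E (ν (k+1)) * E (ν (k+1))))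
    (hε : 4 * ε < 1) {c₂ : ℝ≥0∞} (hdbl : ∀ m, E (m+1) ≤ c₂ * E m) {k : ℕ}
    (hw : weight a E (ν (k+1)) ≠ ⊤) (hk : weight a E (ν k) ≤ c * weight a E (ν (k+1) - 1)) :
    (∑ m ∈ Ico (ν k) (ν (k+1)), weight a E m ^ (1/q) * g m) ^ q ≤
      c * (1 + 3 * (1 - 4 * ε)⁻¹) * 2 ^ q * (∑ n ∈ Ico (ν k) (ν (k+1)), a n * kernelSum D g n ^ q +
        c₂ * ∑ n ∈ Ico (ν (k+1)) (ν (k+1+1)), a n * kernelSum D g n ^ q) := by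
  have hm : ∀ m ∈ Ico (ν k) (ν (k+1)), m ≤ ν (k+1) - 1 := fun m hm => by
    have := (mem_Ico.1 hm).2; omega
  set m' := ν (k+1) - 1
  set CB := 1 + 3 * (1 - 4 * ε)⁻¹
  set G := ∑ m ∈ Ico (ν k) (ν (k+1)), g m
  set A := ∑ n ∈ Ico (ν k) (ν (k+1)), a n
  set B := ∑ n ∈ Ico (ν (k+1)) (ν (k+1+1)), a n / E n
  have hS : (∑ m ∈ Ico (ν k) (ν (k+1)), weight a E m ^ (1/q) * g m) ^ q ≤
      c * weight a E m' * G ^ q := by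
    have hcmp := mul_rpow_sum_le_mul_rpow_sum h.pos (S := Ico (ν k) (ν (k+1))) (g := g)
      (y := 1) (x := c * weight a E m') (u := fun m => weight a E m ^ (1/q)) (v := fun _ => 1)
      fun m hm => by
        rw [one_mul, one_div, ENNReal.rpow_inv_rpow h.pos.ne', ENNReal.one_rpow, mul_one]
        exact (weight_antitone h.mono_pow (mem_Ico.1 hm).1).trans hk
    simpa only [one_mul] using hcmp
  have hwm' : weight a E m' ≤ CB * (A * (E m')⁻¹ + c₂ * B) :=
    calc weight a E m' = weight a E m' * E m' * (E m')⁻¹ := by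
          rw [mul_assoc, ENNReal.mul_inv_cancel (h.pow_ne_zero _) (h.pow_ne_top _), mul_one]
      _ ≤ CB * (A + c₂ * (E m' * B)) * (E m')⁻¹ := mul_le_mul_left
          (weight_mul_le_of_block_end h.mono_pow h.pow_ne_zero h.pow_ne_top hν hν0 hdec hinc hε
            hdbl hw) _
      _ = CB * (A * (E m')⁻¹ + c₂ * B * (E m' * (E m')⁻¹)) := by ring
      _ = CB * (A * (E m')⁻¹ + c₂ * B) := by
          rw [ENNReal.mul_inv_cancel (h.pow_ne_zero _) (h.pow_ne_top _), mul_one]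
  calc (∑ m ∈ Ico (ν k) (ν (k+1)), weight a E m ^ (1/q) * g m) ^ q
      ≤ c * weight a E m' * G ^ q := hS
    _ ≤ c * (CB * (A * (E m')⁻¹ + c₂ * B)) * G ^ q := by gcongr
    _ = c * CB * (A * (E m')⁻¹ * G ^ q + c₂ * (B * G ^ q)) := by ring
    _ ≤ c * CB * (2 ^ q * ∑ n ∈ Ico (ν k) (ν (k+1)), a n * kernelSum D g n ^ q +
          c₂ * (2 ^ q * ∑ n ∈ Ico (ν (k+1)) (ν (k+1+1)), a n * kernelSum D g n ^ q)) := by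
        refine mul_le_mul_right (add_le_add ?_ (mul_le_mul_right ?_ _)) _
        · exact sum_mul_inv_mul_rpow_sum_le h hm hm
        · exact sum_div_mul_rpow_sum_le h fun n hn m hm =>
            (mem_Ico.1 hm).2.le.trans (mem_Ico.1 hn).1
    _ = _ := by ring

theorem tsum_rpow_sum_block_le (h : KernelScale q D E) (hν : StrictMono ν) (hν0 : ν 0 = 0)
    (hdec : ∀ k, weight a E (ν (k+1)) ≤ ε * weight a E (ν k))
    (hinc : ∀ k, weight a E (ν k) * E (ν k) ≤ ε * (weight a E (ν (k+1)) * E (ν (k+1))))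
    (hε : 4 * ε < 1) {c₂ : ℝ≥0∞} (hdbl : ∀ m, E (m+1) ≤ c₂ * E m)
    (hw : ∀ m, weight a E m ≠ ⊤)
    (hblock : ∀ k, weight a E (ν k) ≤ c * weight a E (ν (k+1) - 1) ∨
      weight a E (ν (k+1) - 1) * E (ν (k+1) - 1) ≤ C * (weight a E (ν k) * E (ν k))) :
    ∑' k, (∑ m ∈ Ico (ν k) (ν (k+1)), weight a E m ^ (1/q) * g m) ^ q ≤
      2 ^ q * (c * (1 + 3 * (1 - 4 * ε)⁻¹) * (1 + c₂) + 2 * C * (1 - 4 * ε)⁻¹) *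
        ∑' n, a n * kernelSum D g n ^ q := by
  set Λ := fun n => a n * kernelSum D g n ^ q
  set CA := (1 - 4 * ε)⁻¹
  have hk : ∀ k, (∑ m ∈ Ico (ν k) (ν (k+1)), weight a E m ^ (1/q) * g m) ^ q ≤
      c * (1 + 3 * CA) * 2 ^ q * (∑ n ∈ Ico (ν k) (ν (k+1)), Λ n +
        c₂ * ∑ n ∈ Ico (ν (k+1)) (ν (k+1+1)), Λ n) +
      C * CA * 2 ^ q * (∑ n ∈ Ico (ν (k-1)) (ν k), Λ n + ∑ n ∈ Ico (ν k) (ν (k+1)), Λ n) :=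
    fun k => (hblock k).elim
      (fun hI => le_add_right (rpow_sum_block_le_of_weight_le h hν hν0 hdec hinc hε hdbl (hw _) hI))
      (fun hJ => le_add_left (rpow_sum_block_le_of_weight_mul_le h hν hν0 hdec hinc hε (hw _) hJ))
  calc ∑' k, (∑ m ∈ Ico (ν k) (ν (k+1)), weight a E m ^ (1/q) * g m) ^ q
      ≤ ∑' k, (c * (1 + 3 * CA) * 2 ^ q * (∑ n ∈ Ico (ν k) (ν (k+1)), Λ n +
          c₂ * ∑ n ∈ Ico (ν (k+1)) (ν (k+1+1)), Λ n) +
        C * CA * 2 ^ q * (∑ n ∈ Ico (ν (k-1)) (ν k), Λ n + ∑ n ∈ Ico (ν k) (ν (k+1)), Λ n)) :=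
        ENNReal.tsum_le_tsum hk
    _ = c * (1 + 3 * CA) * 2 ^ q * (∑' k, ∑ n ∈ Ico (ν k) (ν (k+1)), Λ n +
          c₂ * ∑' k, ∑ n ∈ Ico (ν (k+1)) (ν (k+1+1)), Λ n) +
        C * CA * 2 ^ q * (∑' k, ∑ n ∈ Ico (ν (k-1)) (ν k), Λ n +
          ∑' k, ∑ n ∈ Ico (ν k) (ν (k+1)), Λ n) := by
        simp only [ENNReal.tsum_add, ENNReal.tsum_mul_left]
    _ ≤ c * (1 + 3 * CA) * 2 ^ q * (∑' n, Λ n + c₂ * ∑' n, Λ n) +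
        C * CA * 2 ^ q * (∑' n, Λ n + ∑' n, Λ n) := by
        rw [← tsum_eq_tsum_sum_Ico hν hν0, tsum_sum_Ico_pred hν hν0]
        gcongr _ * (_ + _ * ?_) + _
        exact tsum_sum_Ico_succ_le hν hν0 Λ
    _ = _ := by ring

end Blocks

theorem kernelScale_natCast_rpow {q s : ℝ} (hq : 0 < q) (hs : 0 ≤ s) :
    KernelScale q (fun n => ((n+1 : ℕ) : ℝ≥0∞) ^ (s / q)) (fun n => ((n+1 : ℕ) : ℝ≥0∞) ^ s) where
  pos := hq
  mono := fun _ _ hmn => ENNReal.rpow_le_rpow (by gcongr) (div_nonneg hs hq.le)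
  ne_zero := fun n =>
    (ENNReal.rpow_pos (by exact_mod_cast n.succ_pos) (ENNReal.natCast_ne_top _)).ne'
  ne_top := fun _ => ENNReal.rpow_ne_top_of_nonneg (div_nonneg hs hq.le) (ENNReal.natCast_ne_top _)
  rpow_eq := fun _ => by rw [← ENNReal.rpow_mul, div_mul_cancel₀ _ hq.ne']

theorem natCast_succ_succ_rpow_le {s : ℝ} (hs : 0 ≤ s) (m : ℕ) :
    ((m+1+1 : ℕ) : ℝ≥0∞) ^ s ≤ 2 ^ s * ((m+1 : ℕ) : ℝ≥0∞) ^ s := by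
  rw [← ENNReal.mul_rpow_of_nonneg _ _ hs]
  gcongr
  exact_mod_cast (by omega : m + 1 + 1 ≤ 2 * (m + 1))

theorem weight_le_or_weight_mul_le {p r : ℝ} {α a E : ℕ → ℝ≥0∞} {ν : ℕ → ℕ}
    (hν : StrictMono ν) {I J : Set ℕ} (hIJ : I ∪ J = Set.univ)
    (hw : ∀ m, weight a E m = omegaBar p r α (m+1))
    (hE : ∀ m, E m = ((m+1 : ℕ) : ℝ≥0∞) ^ (p * r)) {c C : ℝ≥0∞} (hc0 : c ≠ 0) (hct : c ≠ ⊤)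
    (hI : ∀ k ∈ I, c * omegaBar p r α (ν k + 1) ≤ omegaBar p r α (ν (k+1)))
    (hJ : ∀ k ∈ J, omegaBar p r α (ν (k+1)) * ((ν (k+1) : ℕ) : ℝ≥0∞) ^ (p * r) ≤
      C * (omegaBar p r α (ν k + 1) * ((ν k + 1 : ℕ) : ℝ≥0∞) ^ (p * r))) (k : ℕ) :
    weight a E (ν k) ≤ c⁻¹ * weight a E (ν (k+1) - 1) ∨
      weight a E (ν (k+1) - 1) * E (ν (k+1) - 1) ≤ C * (weight a E (ν k) * E (ν k)) := by
  have hm' : ν (k+1) - 1 + 1 = ν (k+1) := by have := hν k.lt_add_one; omega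
  simp only [hw, hE, hm']
  rcases (hIJ ▸ Set.mem_univ k : k ∈ I ∪ J) with hk | hk
  · exact Or.inl ((ENNReal.mul_le_iff_le_inv hc0 hct).1 (hI k hk))
  · exact Or.inr (hJ k hk)

theorem four_mul_inv_ofReal_lt_one {lam : ℝ} (hlam : 4 < lam) :
    4 * (ENNReal.ofReal lam)⁻¹ < 1 := by
  have hL : 4 < ENNReal.ofReal lam := by
    simpa only [ENNReal.ofReal_ofNat] using (ENNReal.ofReal_lt_ofReal_iff (by linarith)).2 hlam
  rwa [← div_eq_mul_inv, ENNReal.div_lt_iff (Or.inl (lt_trans (by norm_num) hL).ne')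
    (Or.inl ENNReal.ofReal_ne_top), one_mul]

end DiscretizingSequence

open DiscretizingSequence

/-- Blockwise splitting of the weighted sum along a discretizing sequence
(Lemma 2.2): for `0 < q ≤ 1`,
`Σ_n α_n (Σ_j f_j/(j^{pr/q}+n^{pr/q}))^q ≈ Σ_k (Σ_{μ_k ≤ l < μ_{k+1}} (ω̄_l^p)^{1/q} f_l)^q`,
with constants depending only on `p, q, r, λ` (and the constants in the
discretizing-sequence hypotheses). -/
theorem stmt1 (p q r lam : ℝ) (hp : 0 < p) (hr : 0 < r) (hq0 : 0 < q) (hq1 : q ≤ 1)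
    (hlam : 4 < lam) (cI CI : ℝ≥0∞) (hcI : cI ≠ 0) (hCI : CI ≠ ⊤) :
    ∃ K : ℝ≥0∞, K ≠ 0 ∧ K ≠ ⊤ ∧
      ∀ (α : ℕ → ℝ≥0∞) (μ : ℕ → ℕ) (I J : Set ℕ),
        (∀ l, 1 ≤ l → omegaBar p r α l ≠ ⊤) →
        μ 0 = 1 → StrictMono μ →
        (∀ k, ENNReal.ofReal lam * (μ k : ℝ≥0∞) ^ (p * r) ≤ (μ (k+1) : ℝ≥0∞) ^ (p * r)) →
        (∀ k, ENNReal.ofReal lam * omegaBar p r α (μ (k+1)) ≤ omegaBar p r α (μ k)) →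
        (∀ k, ENNReal.ofReal lam * (omegaBar p r α (μ k) * (μ k : ℝ≥0∞) ^ (p * r)) ≤
          omegaBar p r α (μ (k+1)) * (μ (k+1) : ℝ≥0∞) ^ (p * r)) →
        I ∪ J = Set.univ →
        (∀ k ∈ I, cI * omegaBar p r α (μ k) ≤ omegaBar p r α (μ (k+1) - 1) ∧
          omegaBar p r α (μ (k+1) - 1) ≤ CI * omegaBar p r α (μ k)) →
        (∀ k ∈ J, cI * (omegaBar p r α (μ k) * (μ k : ℝ≥0∞) ^ (p * r)) ≤
            omegaBar p r α (μ (k+1) - 1) * ((μ (k+1) - 1 : ℕ) : ℝ≥0∞) ^ (p * r) ∧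
          omegaBar p r α (μ (k+1) - 1) * ((μ (k+1) - 1 : ℕ) : ℝ≥0∞) ^ (p * r) ≤
            CI * (omegaBar p r α (μ k) * (μ k : ℝ≥0∞) ^ (p * r))) →
        ∀ f : ℕ → ℝ≥0∞,
          (∑' n : ℕ, α (n+1) * (∑' j : ℕ, f (j+1) /
              (((j+1 : ℕ) : ℝ≥0∞) ^ (p * r / q) + ((n+1 : ℕ) : ℝ≥0∞) ^ (p * r / q))) ^ q)
            ≤ K * ∑' k : ℕ, (∑ l ∈ Finset.Ico (μ k) (μ (k+1)),
                (omegaBar p r α l) ^ (1/q) * f l) ^ q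
          ∧ (∑' k : ℕ, (∑ l ∈ Finset.Ico (μ k) (μ (k+1)),
                (omegaBar p r α l) ^ (1/q) * f l) ^ q)
            ≤ K * ∑' n : ℕ, α (n+1) * (∑' j : ℕ, f (j+1) /
                (((j+1 : ℕ) : ℝ≥0∞) ^ (p * r / q) + ((n+1 : ℕ) : ℝ≥0∞) ^ (p * r / q))) ^ q := by
  have hpr : 0 ≤ p * r := (mul_pos hp hr).le
  have hε := four_mul_inv_ofReal_lt_one hlam
  have hL0 : ENNReal.ofReal lam ≠ 0 := (ENNReal.ofReal_pos.2 (by linarith)).ne'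
  have hc : min cI 1 ≠ 0 := by simp [hcI]
  have hct : min cI 1 ≠ ⊤ := ne_top_of_le_ne_top ENNReal.one_ne_top (min_le_right _ _)
  -- the constants of `tsum_mul_kernelSum_rpow_le` and `tsum_rpow_sum_block_le` for `C = CI`,
  -- `ε = λ⁻¹`, the doubling constant `2 ^ (p * r)` and `c = (min cI 1)⁻¹` (`cI` may be `⊤`)
  refine ⟨2 * ((min cI 1)⁻¹ + CI) + 2 ^ q * ((min cI 1)⁻¹ *
    (1 + 3 * (1 - 4 * (ENNReal.ofReal lam)⁻¹)⁻¹) * (1 + 2 ^ (p * r)) +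
      2 * CI * (1 - 4 * (ENNReal.ofReal lam)⁻¹)⁻¹), by simp [hct],
    by have := (tsub_pos_of_lt hε).ne'; finiteness, ?_⟩
  intro α μ I J hfin hμ0 hμ _ hdec hinc hIJ hI hJ f
  obtain ⟨ν, rfl⟩ : ∃ ν : ℕ → ℕ, μ = fun k => ν k + 1 :=
    ⟨fun k => μ k - 1, funext fun k => by
      have := hμ.monotone k.zero_le; show μ k = μ k - 1 + 1; omega⟩
  simp only [Nat.add_sub_cancel] at hI hJ
  have hν : StrictMono ν := fun i j hij => Nat.succ_lt_succ_iff.1 (hμ hij)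
  have hν0 : ν 0 = 0 := Nat.succ_injective hμ0
  have hblock := weight_le_or_weight_mul_le (a := fun n => α (n+1))
    (E := fun n => ((n+1 : ℕ) : ℝ≥0∞) ^ (p * r)) hν hIJ (fun _ => rfl) (fun _ => rfl) hc hct
    (fun k hk => (mul_le_mul_left (min_le_left _ _) _).trans (hI k hk).1) fun k hk => (hJ k hk).2
  simp only [← sum_Ico_add' (fun l => omegaBar p r α l ^ (1/q) * f l)]
  have hK := kernelScale_natCast_rpow hq0 hpr
  refine ⟨(tsum_mul_kernelSum_rpow_le hK hq1 hν hν0 hblock (g := fun m => f (m+1))).trans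
    (mul_le_mul_left le_self_add _), (tsum_rpow_sum_block_le hK hν hν0
      (fun k => (ENNReal.mul_le_iff_le_inv hL0 ENNReal.ofReal_ne_top).1 (hdec k))
      (fun k => (ENNReal.mul_le_iff_le_inv hL0 ENNReal.ofReal_ne_top).1 (hinc k)) hε
      (natCast_succ_succ_rpow_le hpr) (fun m => hfin (m+1) (Nat.le_add_left 1 m)) hblock).trans
    (mul_le_mul_left le_add_self _)⟩
end

section
/- Let p, r > 0, (α_n) a non-negative sequence, and ω̄_l^p := Σ_{n=1}^∞ α_n/(n^{pr} + l^{pr}), assumed finite. Let (μ_k) be a discretizing sequence for (ω̄_l^p) with parameter λ > 4. Then for every k with μ_{k+2} defined and every n with μ_k ≤ n < μ_{k+1}: Σ_{j=μ_{k-1}}^{μ_{k+2}-1} α_j/(j^{pr}+n^{pr}) ≥ (1 − 4/λ)·ω̄_n^p, and trivially the left side is at most ω̄_n^p. -/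
open scoped ENNReal

/-!
Split `ω̄_n = H + M + T`, where `M` is the block of the sum over `μ_{k-1} ≤ j < μ_{k+2}`,
`H` the head `j < μ_{k-1}` and `T` the tail `j ≥ μ_{k+2}`. For `j` in the head,
`α_j/(j^{pr}+n^{pr}) · n^{pr} ≤ α_j ≤ 2 μ_{k-1}^{pr} · α_j/(j^{pr}+μ_{k-1}^{pr})`, so
`n^{pr} H ≤ 2 μ_{k-1}^{pr} ω̄_{μ_{k-1}}`, and the growth of `l^{pr} ω̄_l` along `(μ_k)` gives
`λ H ≤ 2 ω̄_n`. For `j` in the tail, `j^{pr} + n^{pr} ≥ (j^{pr} + μ_{k+2}^{pr})/2`, so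
`T ≤ 2 ω̄_{μ_{k+2}}`, and the decay of `ω̄` along `(μ_k)` gives `λ T ≤ 2 ω̄_n`.
Hence `M ≥ (1 - 4/λ) ω̄_n`.
-/

open Finset

namespace ENNReal

variable {q : ℝ}

theorem natCast_rpow_ne_top (hq : 0 ≤ q) (j : ℕ) : (j : ℝ≥0∞) ^ q ≠ ∞ :=
  rpow_ne_top_of_nonneg hq (natCast_ne_top j)

theorem natCast_rpow_ne_zero {j : ℕ} (hj : 1 ≤ j) : (j : ℝ≥0∞) ^ q ≠ 0 :=
  (rpow_pos (by exact_mod_cast hj) (natCast_ne_top j)).ne'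

theorem div_add_self_le_div_add_self {a b c : ℝ≥0∞} (hc₀ : c ≠ 0) (hc : c ≠ ∞)
    (hb : b ≠ ∞) (hab : a ≤ b) : a / (c + a) ≤ b / (c + b) := by
  lift c to NNReal using hc
  lift b to NNReal using hb
  lift a to NNReal using ne_top_of_le_ne_top ENNReal.coe_ne_top hab
  have hc₀ : 0 < c := pos_iff_ne_zero.2 (by exact_mod_cast hc₀)
  have hab : a ≤ b := by exact_mod_cast hab
  rw [← ENNReal.coe_add, ← ENNReal.coe_add, ← ENNReal.coe_div (by positivity),
    ← ENNReal.coe_div (by positivity), ENNReal.coe_le_coe,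
    div_le_div_iff₀ (by positivity) (by positivity)]
  linear_combination mul_le_mul_left hab c

theorem ofReal_one_sub_div_mul_le {lam : ℝ} (hlam : 0 < lam) {W H M T : ℝ≥0∞}
    (hW : W ≠ ∞) (hdec : W = H + M + T) (hH : ENNReal.ofReal lam * H ≤ 2 * W)
    (hT : ENNReal.ofReal lam * T ≤ 2 * W) : ENNReal.ofReal (1 - 4 / lam) * W ≤ M := by
  have hHT : H + T ≤ ENNReal.ofReal (4 / lam) * W := by
    have hlam₀ : ENNReal.ofReal lam ≠ 0 := (ENNReal.ofReal_pos.2 hlam).ne'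
    rw [← ENNReal.mul_le_mul_iff_left hlam₀ ENNReal.ofReal_ne_top, mul_right_comm,
      ← ENNReal.ofReal_mul (by positivity), div_mul_cancel₀ _ hlam.ne', ENNReal.ofReal_ofNat,
      add_mul, mul_comm H, mul_comm T]
    calc _ ≤ 2 * W + 2 * W := add_le_add hH hT
      _ = 4 * W := by ring
  have hHT_ne_top : H + T ≠ ∞ :=
    ne_top_of_le_ne_top (ENNReal.mul_ne_top ENNReal.ofReal_ne_top hW) hHT
  calc ENNReal.ofReal (1 - 4 / lam) * W
      = W - ENNReal.ofReal (4 / lam) * W := by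
        rw [ENNReal.ofReal_sub _ (by positivity), ENNReal.ofReal_one,
          ENNReal.sub_mul fun _ _ => hW, one_mul]
    _ ≤ W - (H + T) := tsub_le_tsub_left hHT W
    _ = M := by
        rw [hdec, show H + M + T = M + (H + T) by ring, ENNReal.add_sub_cancel_right hHT_ne_top]

end ENNReal

noncomputable def omegaTerm (p r : ℝ) (α : ℕ → ℝ≥0∞) (l j : ℕ) : ℝ≥0∞ :=
  α j / ((j : ℝ≥0∞) ^ (p * r) + (l : ℝ≥0∞) ^ (p * r))

namespace omegaBar

variable {p r : ℝ} {α : ℕ → ℝ≥0∞}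

theorem eq_tsum_omegaTerm (l : ℕ) : omegaBar p r α l = ∑' j, omegaTerm p r α l (j + 1) := rfl

theorem antitone (hq : 0 ≤ p * r) : Antitone (omegaBar p r α) := by
  intro m n h
  refine ENNReal.tsum_le_tsum fun j => ENNReal.div_le_div_left ?_ _
  gcongr

theorem monotone_mul_rpow (hq : 0 ≤ p * r) :
    Monotone fun l => omegaBar p r α l * (l : ℝ≥0∞) ^ (p * r) := by
  intro m n h
  simp only [eq_tsum_omegaTerm, ← ENNReal.tsum_mul_right, omegaTerm, ENNReal.div_eq_inv_mul,
    mul_assoc]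
  refine ENNReal.tsum_le_tsum fun j => ?_
  rw [mul_left_comm, mul_left_comm _ (α _), ← ENNReal.div_eq_inv_mul, ← ENNReal.div_eq_inv_mul]
  gcongr α _ * ?_
  exact ENNReal.div_add_self_le_div_add_self
    (ENNReal.natCast_rpow_ne_zero (Nat.le_add_left 1 j)) (ENNReal.natCast_rpow_ne_top hq _)
    (ENNReal.natCast_rpow_ne_top hq n) (by gcongr)

theorem eq_sum_Ico_add_sum_Ico_add_tsum (n : ℕ) {a b : ℕ} (ha : 1 ≤ a) (hab : a ≤ b) :
    omegaBar p r α n = ∑ j ∈ Ico 1 a, omegaTerm p r α n j + ∑ j ∈ Ico a b, omegaTerm p r α n j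
      + ∑' j, omegaTerm p r α n (j + b) := by
  rw [sum_Ico_consecutive _ ha hab, sum_Ico_eq_sum_range, eq_tsum_omegaTerm,
    ← (ENNReal.summable).sum_add_tsum_nat_add' (k := b - 1)]
  congr 1
  · simp only [add_comm 1]
  · congr! 2 with j
    rw [show j + (b - 1) + 1 = j + b by omega]

theorem sum_Ico_omegaTerm_le (n : ℕ) {a : ℕ} (ha : 1 ≤ a) (b : ℕ) :
    ∑ j ∈ Ico a b, omegaTerm p r α n j ≤ omegaBar p r α n := by
  rcases le_total a b with hab | hba
  · rw [eq_sum_Ico_add_sum_Ico_add_tsum n ha hab]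
    exact le_add_right le_add_self
  · simp [Ico_eq_empty_of_le hba]

theorem sum_Ico_one_omegaTerm_mul_rpow_le (hq : 0 ≤ p * r) (m n : ℕ) :
    (∑ j ∈ Ico 1 m, omegaTerm p r α n j) * (n : ℝ≥0∞) ^ (p * r) ≤
      2 * (omegaBar p r α m * (m : ℝ≥0∞) ^ (p * r)) := by
  set N := (n : ℝ≥0∞) ^ (p * r)
  set M := (m : ℝ≥0∞) ^ (p * r)
  have hterm : ∀ j ∈ Ico 1 m, omegaTerm p r α n j * N ≤ 2 * M * omegaTerm p r α m j := by
    intro j hj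
    obtain ⟨hj₁, hjm⟩ := mem_Ico.1 hj
    set J := (j : ℝ≥0∞) ^ (p * r)
    have hJM : J + M ≤ 2 * M := by
      rw [two_mul]; gcongr; exact ENNReal.rpow_le_rpow (Nat.cast_le.2 hjm.le) hq
    calc omegaTerm p r α n j * N ≤ (J + N) * (α j / (J + N)) := by
          rw [omegaTerm, mul_comm]; gcongr; exact le_add_self
      _ ≤ α j := ENNReal.mul_div_le
      _ = (J + M) * (α j / (J + M)) :=
          (ENNReal.mul_div_cancel (by simp [ENNReal.natCast_rpow_ne_zero hj₁]) (ENNReal.add_ne_top.2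
            ⟨ENNReal.natCast_rpow_ne_top hq j, ENNReal.natCast_rpow_ne_top hq m⟩)).symm
      _ ≤ 2 * M * omegaTerm p r α m j := mul_le_mul_left hJM _
  calc (∑ j ∈ Ico 1 m, omegaTerm p r α n j) * N
      ≤ ∑ j ∈ Ico 1 m, 2 * M * omegaTerm p r α m j := by rw [sum_mul]; exact sum_le_sum hterm
    _ ≤ 2 * M * omegaBar p r α m := by
        rw [← mul_sum]; gcongr; exact sum_Ico_omegaTerm_le m le_rfl m
    _ = 2 * (omegaBar p r α m * M) := by ring

theorem tsum_omegaTerm_add_le (hq : 0 ≤ p * r) (n : ℕ) {b : ℕ} (hb : 1 ≤ b) :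
    ∑' j, omegaTerm p r α n (j + b) ≤ 2 * omegaBar p r α b := by
  have hterm : ∀ j, omegaTerm p r α n (j + b) ≤ 2 * omegaTerm p r α b (j + b) := by
    intro j
    set I := ((j + b : ℕ) : ℝ≥0∞) ^ (p * r)
    calc α (j + b) / (I + (n : ℝ≥0∞) ^ (p * r)) ≤ α (j + b) / I :=
          ENNReal.div_le_div_left le_self_add _
      _ = 2 * α (j + b) / (2 * I) :=
          (ENNReal.mul_div_mul_left _ _ two_ne_zero ENNReal.ofNat_ne_top).symm
      _ ≤ 2 * α (j + b) / (I + (b : ℝ≥0∞) ^ (p * r)) := by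
          rw [two_mul I]; gcongr
          exact ENNReal.rpow_le_rpow (Nat.cast_le.2 (Nat.le_add_left b j)) hq
      _ = 2 * omegaTerm p r α b (j + b) := mul_div_assoc _ _ _
  calc ∑' j, omegaTerm p r α n (j + b) ≤ ∑' j, 2 * omegaTerm p r α b (j + b) :=
        ENNReal.tsum_le_tsum hterm
    _ = 2 * ∑' j, omegaTerm p r α b (j + b) := ENNReal.tsum_mul_left
    _ ≤ 2 * omegaBar p r α b := by
        rw [eq_sum_Ico_add_sum_Ico_add_tsum b hb le_rfl]
        gcongr
        exact le_add_self

theorem mul_sum_Ico_one_omegaTerm_le (hq : 0 ≤ p * r) {c : ℝ≥0∞} {m m' n : ℕ} (hn : 1 ≤ n)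
    (hm'n : m' ≤ n) (h : c * (omegaBar p r α m * (m : ℝ≥0∞) ^ (p * r)) ≤
      omegaBar p r α m' * (m' : ℝ≥0∞) ^ (p * r)) :
    c * ∑ j ∈ Ico 1 m, omegaTerm p r α n j ≤ 2 * omegaBar p r α n := by
  rw [← ENNReal.mul_le_mul_iff_left (ENNReal.natCast_rpow_ne_zero hn)
    (ENNReal.natCast_rpow_ne_top hq n), mul_assoc, mul_assoc]
  calc c * ((∑ j ∈ Ico 1 m, omegaTerm p r α n j) * (n : ℝ≥0∞) ^ (p * r))
      ≤ c * (2 * (omegaBar p r α m * (m : ℝ≥0∞) ^ (p * r))) := by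
        gcongr c * ?_; exact sum_Ico_one_omegaTerm_mul_rpow_le hq m n
    _ = 2 * (c * (omegaBar p r α m * (m : ℝ≥0∞) ^ (p * r))) := mul_left_comm _ _ _
    _ ≤ 2 * (omegaBar p r α n * (n : ℝ≥0∞) ^ (p * r)) := by
        gcongr 2 * ?_; exact h.trans (monotone_mul_rpow hq hm'n)

theorem mul_tsum_omegaTerm_add_le (hq : 0 ≤ p * r) {c : ℝ≥0∞} {b m' n : ℕ} (hb : 1 ≤ b)
    (hnm' : n ≤ m') (h : c * omegaBar p r α b ≤ omegaBar p r α m') :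
    c * ∑' j, omegaTerm p r α n (j + b) ≤ 2 * omegaBar p r α n :=
  calc c * ∑' j, omegaTerm p r α n (j + b) ≤ c * (2 * omegaBar p r α b) := by
        gcongr; exact tsum_omegaTerm_add_le hq n hb
    _ = 2 * (c * omegaBar p r α b) := mul_left_comm _ _ _
    _ ≤ 2 * omegaBar p r α n := by gcongr; exact h.trans (antitone hq hnm')

end omegaBar

open omegaBar in
theorem stmt2_general (p r lam : ℝ) (hp : 0 < p) (hr : 0 < r) (hlam : 4 < lam)
    (α : ℕ → ℝ≥0∞) (μ : ℕ → ℕ)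
    (hfin : ∀ l, 1 ≤ l → omegaBar p r α l ≠ ⊤)
    (hμ0 : μ 0 = 1) (hmono : StrictMono μ)
    (h4 : ∀ k, ENNReal.ofReal lam * omegaBar p r α (μ (k+1)) ≤ omegaBar p r α (μ k))
    (h5 : ∀ k, ENNReal.ofReal lam * (omegaBar p r α (μ k) * (μ k : ℝ≥0∞) ^ (p * r)) ≤
      omegaBar p r α (μ (k+1)) * (μ (k+1) : ℝ≥0∞) ^ (p * r)) :
    ∀ k, 1 ≤ k → ∀ n, μ k ≤ n → n < μ (k+1) →
      ENNReal.ofReal (1 - 4 / lam) * omegaBar p r α n ≤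
        (∑ j ∈ Finset.Ico (μ (k-1)) (μ (k+2)),
          α j / ((j : ℝ≥0∞) ^ (p * r) + (n : ℝ≥0∞) ^ (p * r)))
      ∧ (∑ j ∈ Finset.Ico (μ (k-1)) (μ (k+2)),
          α j / ((j : ℝ≥0∞) ^ (p * r) + (n : ℝ≥0∞) ^ (p * r)))
        ≤ omegaBar p r α n := by
  intro k hk n hkn hnk
  have hq : 0 ≤ p * r := (mul_pos hp hr).le
  have hμ : ∀ i, 1 ≤ μ i := fun i => hμ0 ▸ hmono.monotone i.zero_le
  have hn : 1 ≤ n := (hμ k).trans hkn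
  have head := mul_sum_Ico_one_omegaTerm_le (α := α) (m := μ (k - 1)) hq hn hkn
    (by simpa only [Nat.sub_add_cancel hk] using h5 (k - 1))
  have tail := mul_tsum_omegaTerm_add_le (b := μ (k + 2)) hq (hμ _) hnk.le (h4 (k + 1))
  exact ⟨ENNReal.ofReal_one_sub_div_mul_le (by linarith) (hfin n hn)
      (eq_sum_Ico_add_sum_Ico_add_tsum n (hμ _) (hmono.monotone (by omega))) head tail,
    sum_Ico_omegaTerm_le n (hμ _) _⟩

/-- For a discretizing sequence `(μ_k)` with parameter `λ > 4` and `μ_k ≤ n < μ_{k+1}`: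
`Σ_{j=μ_{k-1}}^{μ_{k+2}-1} α_j/(j^{pr}+n^{pr}) ≥ (1-4/λ)·ω̄_n^p`, while trivially the
partial sum is at most `ω̄_n^p`. (Indices 0-based, so the statement is for `k ≥ 1`.) -/
theorem stmt2 (p r lam : ℝ) (hp : 0 < p) (hr : 0 < r) (hlam : 4 < lam)
    (α : ℕ → ℝ≥0∞) (μ : ℕ → ℕ)
    (hfin : ∀ l, 1 ≤ l → omegaBar p r α l ≠ ⊤)
    (hμ0 : μ 0 = 1) (hmono : StrictMono μ)
    (h3 : ∀ k, ENNReal.ofReal lam * (μ k : ℝ≥0∞) ^ (p * r) ≤ (μ (k+1) : ℝ≥0∞) ^ (p * r))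
    (h4 : ∀ k, ENNReal.ofReal lam * omegaBar p r α (μ (k+1)) ≤ omegaBar p r α (μ k))
    (h5 : ∀ k, ENNReal.ofReal lam * (omegaBar p r α (μ k) * (μ k : ℝ≥0∞) ^ (p * r)) ≤
      omegaBar p r α (μ (k+1)) * (μ (k+1) : ℝ≥0∞) ^ (p * r)) :
    ∀ k, 1 ≤ k → ∀ n, μ k ≤ n → n < μ (k+1) →
      ENNReal.ofReal (1 - 4 / lam) * omegaBar p r α n ≤
        (∑ j ∈ Finset.Ico (μ (k-1)) (μ (k+2)),
          α j / ((j : ℝ≥0∞) ^ (p * r) + (n : ℝ≥0∞) ^ (p * r)))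
      ∧ (∑ j ∈ Finset.Ico (μ (k-1)) (μ (k+2)),
          α j / ((j : ℝ≥0∞) ^ (p * r) + (n : ℝ≥0∞) ^ (p * r)))
        ≤ omegaBar p r α n :=
  stmt2_general p r lam hp hr hlam α μ hfin hμ0 hmono h4 h5
end

section
/- Let f(t) be a non-negative, non-decreasing function on [0,1] such that f(t)/t is non-increasing. Then the least concave majorant g of f on [0,1] satisfies f(t) ≤ g(t) ≤ 2·f(t) for all t ∈ (0,1]. -/
/-!
For `t ∈ (0,1]` the affine function `s ↦ f t / t * s + f t` is a concave majorant of `f`: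
below `t` it dominates `f t ≥ f s` by monotonicity, above `t` it dominates `f t / t * s ≥ f s`
because `f s / s` is nonincreasing. Its value at `t` is `2 f t`, so the least concave majorant
is at most `2 f t` there; it is at least `f t` like every majorant.
-/

open Set

theorem le_sInf_concave_majorants_and_sInf_le {E : Type*} [AddCommGroup E] [Module ℝ E]
    {s : Set E} {f h : E → ℝ} {x : E} (hx : x ∈ s) (hconc : ConcaveOn ℝ s h)
    (hfh : ∀ t ∈ s, f t ≤ h t) :
    f x ≤ sInf {y : ℝ | ∃ h : E → ℝ, ConcaveOn ℝ s h ∧ (∀ t ∈ s, f t ≤ h t) ∧ y = h x} ∧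
      sInf {y : ℝ | ∃ h : E → ℝ, ConcaveOn ℝ s h ∧ (∀ t ∈ s, f t ≤ h t) ∧ y = h x} ≤ h x := by
  have hmem : h x ∈ {y : ℝ | ∃ h : E → ℝ, ConcaveOn ℝ s h ∧ (∀ t ∈ s, f t ≤ h t) ∧ y = h x} :=
    ⟨h, hconc, hfh, rfl⟩
  have hlower : ∀ y ∈ {y : ℝ | ∃ h : E → ℝ, ConcaveOn ℝ s h ∧ (∀ t ∈ s, f t ≤ h t) ∧ y = h x},
      f x ≤ y := by
    rintro y ⟨h', -, hfh', rfl⟩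
    exact hfh' x hx
  exact ⟨le_csInf ⟨h x, hmem⟩ hlower, csInf_le ⟨f x, hlower⟩ hmem⟩

theorem concaveOn_mul_add_const (s : Set ℝ) (hs : Convex ℝ s) (a b : ℝ) :
    ConcaveOn ℝ s fun x => a * x + b :=
  ((LinearMap.mul ℝ ℝ a).concaveOn hs).add_const b

theorem le_div_mul_add_self {f : ℝ → ℝ} (hnn : ∀ t ∈ Icc (0:ℝ) 1, 0 ≤ f t)
    (hmono : MonotoneOn f (Icc 0 1)) (hdec : AntitoneOn (fun t => f t / t) (Ioc 0 1))
    {t : ℝ} (ht : t ∈ Ioc (0:ℝ) 1) {s : ℝ} (hs : s ∈ Icc (0:ℝ) 1) :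
    f s ≤ f t / t * s + f t := by
  have htI : t ∈ Icc (0:ℝ) 1 := Ioc_subset_Icc_self ht
  have hslope : 0 ≤ f t / t := div_nonneg (hnn t htI) ht.1.le
  rcases le_total s t with hst | hts
  · have := hmono hs htI hst
    nlinarith [hs.1]
  · have hs0 : 0 < s := ht.1.trans_le hts
    calc f s = f s / s * s := (div_mul_cancel₀ _ hs0.ne').symm
      _ ≤ f t / t * s := mul_le_mul_of_nonneg_right (hdec ht ⟨hs0, hs.2⟩ hts) hs0.le
      _ ≤ f t / t * s + f t := le_add_of_nonneg_right (hnn t htI)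

/-- A nonnegative nondecreasing `f` on `[0,1]` with `f(t)/t` nonincreasing is equivalent
to its least concave majorant: `f ≤ g ≤ 2f` on `(0,1]`. -/
theorem stmt4 (f : ℝ → ℝ) (hnn : ∀ t ∈ Set.Icc (0:ℝ) 1, 0 ≤ f t)
    (hmono : MonotoneOn f (Set.Icc (0:ℝ) 1))
    (hdec : AntitoneOn (fun t => f t / t) (Set.Ioc (0:ℝ) 1))
    (g : ℝ → ℝ)
    (hg : ∀ x ∈ Set.Icc (0:ℝ) 1, g x = sInf {y : ℝ | ∃ h : ℝ → ℝ,
      ConcaveOn ℝ (Set.Icc (0:ℝ) 1) h ∧ (∀ t ∈ Set.Icc (0:ℝ) 1, f t ≤ h t) ∧ y = h x}) :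
    ∀ t ∈ Set.Ioc (0:ℝ) 1, f t ≤ g t ∧ g t ≤ 2 * f t := by
  intro t ht
  have htI : t ∈ Icc (0:ℝ) 1 := Ioc_subset_Icc_self ht
  obtain ⟨hlower, hupper⟩ := le_sInf_concave_majorants_and_sInf_le htI
    (concaveOn_mul_add_const _ (convex_Icc 0 1) (f t / t) (f t))
    (fun s hs => le_div_mul_add_self hnn hmono hdec ht hs)
  have hvalue : f t / t * t + f t = 2 * f t := by
    rw [div_mul_cancel₀ _ ht.1.ne']; ring
  rw [hg t htI]
  exact ⟨hlower, hupper.trans_eq hvalue⟩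
end

section
/- Let l ∈ ℕ_0, r ∈ ℕ, and let ω be r-quasiconcave with ω_N := ω(1/N). Let f ∈ L^2(𝕋^d) have Fourier coefficients a_n, and set R_n := (Σ_{‖k‖_∞ = n} |a_k|²)^{1/2}. Then the condition 'for all N ∈ ℕ: Σ_{n=1}^∞ |R_n · n^l · min(1, n^r/N^r)|² ≲ ω_N²' is equivalent to the condition 'for all k in the discretizing sequence: Σ_{n=μ_k}^{μ_{k+1}−1} |n^l R_n|² ≲ ω_{μ_k}² when k ∈ I, and Σ_{n=μ_k}^{μ_{k+1}−1} |n^{l+r} R_n|² ≲ ((μ_{k+1}−1)^r ω_{μ_{k+1}−1})² when k ∈ J', where (μ_k) is the discretizing sequence for (ω_n) with index sets I, J. -/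
/-!
Cut ℕ≥1 into the blocks `[μ k, μ (k+1))`. On such a block the factor `min 1 (n^r / N^r)` is
`1` when `N ≤ μ k` and `n^r / N^r` when `μ (k+1) - 1 ≤ N`; testing `N = μ k` and
`N = μ (k+1) - 1` gives the block bounds. Conversely, the comparability of `ω` (for `k ∈ I`)
or of `ω n * n^r` (for `k ∈ J`) at the two ends of a block turns either block bound into the
other one. Fix `N` in the block `k₀`. Blocks `k < k₀` are estimated by the `(l + r)`-bound
and the growth of `ω n * n^r`, blocks `k > k₀` by the `l`-bound and the decay of `ω`; both are
geometric along `μ`, so block `k` contributes `≲ 2^{-|k - k₀|} ω_N²`, which sums to `≲ ω_N²`.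
-/

open scoped ENNReal

open Finset

section Geometric

variable {α : Type*} [Monoid α] [Preorder α] [MulLeftMono α] {u : ℕ → α} {c : α}

lemma le_pow_mul_of_forall_succ_le (h : ∀ k, u (k + 1) ≤ c * u k) (j m : ℕ) :
    u (j + m) ≤ c ^ m * u j := by
  induction m with
  | zero => simp
  | succ m ih =>
    calc u (j + (m + 1)) ≤ c * u (j + m) := h _
      _ ≤ c * (c ^ m * u j) := mul_le_mul_right ih c
      _ = c ^ (m + 1) * u j := by rw [pow_succ', mul_assoc]

lemma le_pow_mul_of_forall_le_succ (h : ∀ k, u k ≤ c * u (k + 1)) (j m : ℕ) :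
    u j ≤ c ^ m * u (j + m) := by
  induction m with
  | zero => simp
  | succ m ih =>
    calc u j ≤ c ^ m * u (j + m) := ih
      _ ≤ c ^ m * (c * u (j + m + 1)) := mul_le_mul_right (h _) _
      _ = c ^ (m + 1) * u (j + (m + 1)) := by rw [pow_succ, mul_assoc, add_assoc]

end Geometric

namespace ENNReal

lemma sq_le_inv_two_mul_sq {lam x y : ℝ≥0∞} (hlam : 2 ≤ lam) (h : lam * x ≤ y) :
    x ^ 2 ≤ 2⁻¹ * y ^ 2 := by
  have hx : 2 * x ^ 2 ≤ y ^ 2 :=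
    calc 2 * x ^ 2 ≤ lam ^ 2 * x ^ 2 := by
          gcongr
          calc (2 : ℝ≥0∞) ≤ 2 ^ 2 := by norm_num
            _ ≤ lam ^ 2 := by gcongr
      _ = (lam * x) ^ 2 := (mul_pow _ _ _).symm
      _ ≤ y ^ 2 := by gcongr
  rw [← ENNReal.div_eq_inv_mul, ENNReal.le_div_iff_mul_le (by simp) (by simp), mul_comm]
  exact hx

-- `min c 1` rather than `c`, because `c = ∞` would give `c⁻¹ = 0`.
lemma le_inv_min_one_mul {c x y : ℝ≥0∞} (hc : c ≠ 0) (h : c * x ≤ y) :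
    x ≤ (min c 1)⁻¹ * y := by
  rw [← ENNReal.div_eq_inv_mul, ENNReal.le_div_iff_mul_le (by simp [hc]) (by simp), mul_comm]
  exact (mul_le_mul_left (min_le_left c 1) x).trans h

lemma mul_min_one_div {a b : ℝ≥0∞} (ha₀ : a ≠ 0) (ha : a ≠ ∞) : a * min 1 (b / a) = min a b := by
  rw [mul_min_of_nonneg _ _ (zero_le (a := a)), mul_one, ENNReal.mul_div_cancel ha₀ ha]

lemma inv_two_pow_eq_two_mul_inv_two_pow_succ (m : ℕ) :
    (2⁻¹ : ℝ≥0∞) ^ m = 2 * 2⁻¹ ^ (m + 1) := by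
  rw [pow_succ, mul_left_comm, ENNReal.mul_inv_cancel two_ne_zero ofNat_ne_top, mul_one]

lemma tsum_inv_two_pow_dist_le (k₀ : ℕ) : ∑' k, (2⁻¹ : ℝ≥0∞) ^ Nat.dist k k₀ ≤ 3 := by
  have hgeom : ∑' i, (2⁻¹ : ℝ≥0∞) ^ i = 2 := by
    rw [ENNReal.tsum_geometric, ENNReal.one_sub_inv_two, inv_inv]
  rw [← ENNReal.summable.sum_add_tsum_nat_add' (k := k₀ + 1)]
  have hlow : ∑ k ∈ range (k₀ + 1), (2⁻¹ : ℝ≥0∞) ^ Nat.dist k k₀ ≤ 2 := by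
    calc ∑ k ∈ range (k₀ + 1), (2⁻¹ : ℝ≥0∞) ^ Nat.dist k k₀
        = ∑ k ∈ range (k₀ + 1), (2⁻¹ : ℝ≥0∞) ^ (k₀ + 1 - 1 - k) := by
          refine sum_congr rfl fun k hk => ?_
          rw [Nat.dist_eq_sub_of_le (by simpa [Nat.lt_succ_iff] using hk)]
          rfl
      _ = ∑ k ∈ range (k₀ + 1), (2⁻¹ : ℝ≥0∞) ^ k := sum_range_reflect (2⁻¹ ^ ·) _
      _ ≤ 2 := (ENNReal.sum_le_tsum _).trans_eq hgeom
  have hhigh : ∑' i, (2⁻¹ : ℝ≥0∞) ^ Nat.dist (i + (k₀ + 1)) k₀ = 1 := by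
    have hdist : ∀ i, Nat.dist (i + (k₀ + 1)) k₀ = i + 1 := fun i => by
      rw [Nat.dist_eq_sub_of_le_right (by omega)]; omega
    simp_rw [hdist, pow_succ, ENNReal.tsum_mul_right, hgeom]
    exact ENNReal.mul_inv_cancel two_ne_zero ofNat_ne_top
  rw [hhigh]
  exact (add_le_add_left hlow 1).trans_eq (by norm_num)

end ENNReal

noncomputable def blockSum (l : ℕ) (R : ℕ → ℝ≥0∞) (a b : ℕ) : ℝ≥0∞ :=
  ∑ n ∈ Ico a b, ((n : ℝ≥0∞) ^ l * R n) ^ 2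

noncomputable def weightedSq (l r N : ℕ) (R : ℕ → ℝ≥0∞) (n : ℕ) : ℝ≥0∞ :=
  (R n * (n : ℝ≥0∞) ^ l * min 1 ((n : ℝ≥0∞) ^ r / (N : ℝ≥0∞) ^ r)) ^ 2

section Blocks

variable {l r N a b : ℕ} {R : ℕ → ℝ≥0∞}

lemma blockSum_add (l r : ℕ) (R : ℕ → ℝ≥0∞) (a b : ℕ) :
    blockSum (l + r) R a b = ∑ n ∈ Ico a b, ((n : ℝ≥0∞) ^ r) ^ 2 * ((n : ℝ≥0∞) ^ l * R n) ^ 2 :=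
  sum_congr rfl fun n _ => by ring

lemma pow_sq_mul_blockSum_le_blockSum_add :
    ((a : ℝ≥0∞) ^ r) ^ 2 * blockSum l R a b ≤ blockSum (l + r) R a b := by
  rw [blockSum_add, blockSum, mul_sum]
  refine sum_le_sum fun n hn => ?_
  gcongr
  exact (mem_Ico.mp hn).1

lemma blockSum_add_le_pow_sq_mul_blockSum :
    blockSum (l + r) R a b ≤ (((b - 1 : ℕ) : ℝ≥0∞) ^ r) ^ 2 * blockSum l R a b := by
  rw [blockSum_add, blockSum, mul_sum]
  refine sum_le_sum fun n hn => ?_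
  gcongr
  have := (mem_Ico.mp hn).2
  omega

lemma sum_weightedSq_le_blockSum :
    ∑ n ∈ Ico a b, weightedSq l r N R n ≤ blockSum l R a b := by
  refine sum_le_sum fun n _ => ?_
  calc weightedSq l r N R n ≤ (R n * (n : ℝ≥0∞) ^ l * 1) ^ 2 := by
        unfold weightedSq; gcongr; exact min_le_left _ _
    _ = ((n : ℝ≥0∞) ^ l * R n) ^ 2 := by ring

lemma sum_weightedSq_eq_blockSum (hN : N ≠ 0) (hNa : N ≤ a) :
    ∑ n ∈ Ico a b, weightedSq l r N R n = blockSum l R a b := by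
  refine sum_congr rfl fun n hn => ?_
  have hNn : (N : ℝ≥0∞) ^ r ≤ (n : ℝ≥0∞) ^ r := by
    gcongr
    exact hNa.trans (mem_Ico.mp hn).1
  rw [weightedSq, min_eq_left, mul_one, mul_comm]
  rwa [ENNReal.le_div_iff_mul_le (by simp [hN]) (by simp), one_mul]

lemma pow_sq_mul_weightedSq (hN : N ≠ 0) (n : ℕ) :
    ((N : ℝ≥0∞) ^ r) ^ 2 * weightedSq l r N R n
      = (R n * (n : ℝ≥0∞) ^ l * min ((N : ℝ≥0∞) ^ r) ((n : ℝ≥0∞) ^ r)) ^ 2 := by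
  rw [weightedSq, ← mul_pow, ← ENNReal.mul_min_one_div (b := (n : ℝ≥0∞) ^ r)
    (by simp [hN]) (by simp)]
  ring

lemma pow_sq_mul_sum_weightedSq_le_blockSum_add (hN : N ≠ 0) :
    ((N : ℝ≥0∞) ^ r) ^ 2 * ∑ n ∈ Ico a b, weightedSq l r N R n ≤ blockSum (l + r) R a b := by
  rw [mul_sum]
  refine sum_le_sum fun n _ => ?_
  rw [pow_sq_mul_weightedSq hN, pow_add]
  calc (R n * (n : ℝ≥0∞) ^ l * min ((N : ℝ≥0∞) ^ r) ((n : ℝ≥0∞) ^ r)) ^ 2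
      ≤ (R n * (n : ℝ≥0∞) ^ l * (n : ℝ≥0∞) ^ r) ^ 2 := by gcongr; exact min_le_right _ _
    _ = ((n : ℝ≥0∞) ^ l * (n : ℝ≥0∞) ^ r * R n) ^ 2 := by ring

lemma pow_sq_mul_sum_weightedSq_eq_blockSum_add (hN : N ≠ 0) (hbN : b ≤ N + 1) :
    ((N : ℝ≥0∞) ^ r) ^ 2 * ∑ n ∈ Ico a b, weightedSq l r N R n = blockSum (l + r) R a b := by
  rw [mul_sum]
  refine sum_congr rfl fun n hn => ?_
  have hnN : (n : ℝ≥0∞) ^ r ≤ (N : ℝ≥0∞) ^ r := by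
    gcongr
    have := (mem_Ico.mp hn).2
    omega
  rw [pow_sq_mul_weightedSq hN, min_eq_right hnN, pow_add]
  ring

end Blocks

section Partition

variable {μ : ℕ → ℕ}

lemma sum_range_sum_Ico (hμ : Monotone μ) (f : ℕ → ℝ≥0∞) (K : ℕ) :
    ∑ k ∈ range K, ∑ n ∈ Ico (μ k) (μ (k + 1)), f n = ∑ n ∈ Ico (μ 0) (μ K), f n := by
  induction K with
  | zero => simp
  | succ K ih =>
    rw [sum_range_succ, ih, sum_Ico_consecutive f (hμ (Nat.zero_le K)) (hμ K.le_succ)]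

lemma tsum_succ_eq_tsum_sum_Ico (hμ : StrictMono μ) (hμ0 : μ 0 = 1) (f : ℕ → ℝ≥0∞) :
    ∑' n, f (n + 1) = ∑' k, ∑ n ∈ Ico (μ k) (μ (k + 1)), f n := by
  rw [ENNReal.tsum_eq_iSup_nat' ((Filter.tendsto_sub_atTop_nat 1).comp hμ.tendsto_atTop),
    ENNReal.tsum_eq_iSup_nat]
  refine iSup_congr fun K => ?_
  rw [sum_range_sum_Ico hμ.monotone, hμ0, sum_Ico_eq_sum_range]
  simp only [Function.comp_apply, add_comm]

lemma sum_Ico_le_tsum_succ (hμ : StrictMono μ) (hμ0 : μ 0 = 1) (f : ℕ → ℝ≥0∞) (k : ℕ) :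
    ∑ n ∈ Ico (μ k) (μ (k + 1)), f n ≤ ∑' n, f (n + 1) :=
  (tsum_succ_eq_tsum_sum_Ico hμ hμ0 f).symm ▸
    ENNReal.le_tsum (f := fun k => ∑ n ∈ Ico (μ k) (μ (k + 1)), f n) k

lemma StrictMono.exists_le_lt_succ (hμ : StrictMono μ) {N : ℕ} (hN : μ 0 ≤ N) :
    ∃ k, μ k ≤ N ∧ N < μ (k + 1) := by
  by_contra! h
  have hle : ∀ k, μ k ≤ N := fun k => Nat.rec hN (fun k ih => h k ih) k
  exact (hle (N + 1)).not_gt (N.lt_succ_self.trans_le (hμ.id_le (N + 1)))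

end Partition

-- A block `[a, b)` of type `I` with the `l`-bound, or of type `J` with the `(l + r)`-bound.
def BlockBound (l r : ℕ) (R ω : ℕ → ℝ≥0∞) (C K : ℝ≥0∞) (a b : ℕ) : Prop :=
  (blockSum l R a b ≤ C * ω a ^ 2 ∧ ω a ≤ K * ω (b - 1)) ∨
    (blockSum (l + r) R a b ≤ C * (ω (b - 1) * ((b - 1 : ℕ) : ℝ≥0∞) ^ r) ^ 2 ∧
      ω (b - 1) * ((b - 1 : ℕ) : ℝ≥0∞) ^ r ≤ K * (ω a * (a : ℝ≥0∞) ^ r))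

section Comparison

variable {l r N a b : ℕ} {R ω : ℕ → ℝ≥0∞} {C K : ℝ≥0∞}

lemma blockSum_add_le_of_le_mul (hA : blockSum l R a b ≤ C * ω a ^ 2)
    (hω : ω a ≤ K * ω (b - 1)) :
    blockSum (l + r) R a b ≤ C * K ^ 2 * (ω (b - 1) * ((b - 1 : ℕ) : ℝ≥0∞) ^ r) ^ 2 :=
  calc blockSum (l + r) R a b
      ≤ (((b - 1 : ℕ) : ℝ≥0∞) ^ r) ^ 2 * blockSum l R a b := blockSum_add_le_pow_sq_mul_blockSum
    _ ≤ (((b - 1 : ℕ) : ℝ≥0∞) ^ r) ^ 2 * (C * (K * ω (b - 1)) ^ 2) := by gcongr; exact hA.trans (by gcongr)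
    _ = C * K ^ 2 * (ω (b - 1) * ((b - 1 : ℕ) : ℝ≥0∞) ^ r) ^ 2 := by ring

lemma blockSum_le_of_le_mul (ha : a ≠ 0)
    (hB : blockSum (l + r) R a b ≤ C * (ω (b - 1) * ((b - 1 : ℕ) : ℝ≥0∞) ^ r) ^ 2)
    (hg : ω (b - 1) * ((b - 1 : ℕ) : ℝ≥0∞) ^ r ≤ K * (ω a * (a : ℝ≥0∞) ^ r)) :
    blockSum l R a b ≤ C * K ^ 2 * ω a ^ 2 := by
  refine (ENNReal.mul_le_mul_iff_right (a := ((a : ℝ≥0∞) ^ r) ^ 2) (by simp [ha]) (by simp)).mp ?_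
  calc ((a : ℝ≥0∞) ^ r) ^ 2 * blockSum l R a b ≤ blockSum (l + r) R a b :=
        pow_sq_mul_blockSum_le_blockSum_add
    _ ≤ C * (K * (ω a * (a : ℝ≥0∞) ^ r)) ^ 2 := hB.trans (by gcongr)
    _ = ((a : ℝ≥0∞) ^ r) ^ 2 * (C * K ^ 2 * ω a ^ 2) := by ring

lemma BlockBound.blockSums_le (ha : a ≠ 0) (h : BlockBound l r R ω C K a b) :
    blockSum l R a b ≤ C * (1 + K ^ 2) * ω a ^ 2 ∧
      blockSum (l + r) R a b ≤ C * (1 + K ^ 2) * (ω (b - 1) * ((b - 1 : ℕ) : ℝ≥0∞) ^ r) ^ 2 := by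
  have h1 : C ≤ C * (1 + K ^ 2) := le_mul_of_one_le_right' le_self_add
  have hK : C * K ^ 2 ≤ C * (1 + K ^ 2) := by gcongr; exact le_add_self
  rcases h with ⟨hA, hω⟩ | ⟨hB, hg⟩
  · exact ⟨hA.trans (by gcongr), (blockSum_add_le_of_le_mul hA hω).trans (by gcongr)⟩
  · exact ⟨(blockSum_le_of_le_mul ha hB hg).trans (by gcongr), hB.trans (by gcongr)⟩

end Comparison

section Backward

variable {l r N : ℕ} {R ω : ℕ → ℝ≥0∞} {μ : ℕ → ℕ} {C K : ℝ≥0∞}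

lemma sum_weightedSq_le_of_mem_Ico {a b : ℕ} (ha : 0 < a) (haN : a ≤ N) (hNb : N < b)
    (hω : AntitoneOn ω (Set.Ici 1))
    (hg : MonotoneOn (fun n => ω n * (n : ℝ≥0∞) ^ r) (Set.Ici 1))
    (hA : blockSum l R a b ≤ C * ω a ^ 2)
    (hB : blockSum (l + r) R a b ≤ C * (ω (b - 1) * ((b - 1 : ℕ) : ℝ≥0∞) ^ r) ^ 2)
    (hcomp : ω a ≤ K * ω (b - 1) ∨
      ω (b - 1) * ((b - 1 : ℕ) : ℝ≥0∞) ^ r ≤ K * (ω a * (a : ℝ≥0∞) ^ r)) :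
    ∑ n ∈ Ico a b, weightedSq l r N R n ≤ C * K ^ 2 * ω N ^ 2 := by
  have hN : 0 < N := ha.trans_le haN
  have hNb' : N ≤ b - 1 := by omega
  rcases hcomp with hωa | hga
  · calc ∑ n ∈ Ico a b, weightedSq l r N R n ≤ blockSum l R a b := sum_weightedSq_le_blockSum
      _ ≤ C * (K * ω N) ^ 2 := hA.trans <| by
          gcongr; exact hωa.trans (by gcongr; exact hω hN (hN.trans_le hNb') hNb')
      _ = C * K ^ 2 * ω N ^ 2 := by ring
  · refine (ENNReal.mul_le_mul_iff_right (a := ((N : ℝ≥0∞) ^ r) ^ 2) (by simp [hN.ne']) (by simp)).mp ?_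
    calc ((N : ℝ≥0∞) ^ r) ^ 2 * ∑ n ∈ Ico a b, weightedSq l r N R n ≤ blockSum (l + r) R a b :=
          pow_sq_mul_sum_weightedSq_le_blockSum_add hN.ne'
      _ ≤ C * (K * (ω N * (N : ℝ≥0∞) ^ r)) ^ 2 := hB.trans <| by
          gcongr C * ?_ ^ 2
          exact hga.trans (mul_le_mul_right (hg ha hN haN) K)
      _ = ((N : ℝ≥0∞) ^ r) ^ 2 * (C * K ^ 2 * ω N ^ 2) := by ring

lemma sum_weightedSq_le_of_lt {k k₀ : ℕ} (hk : k < k₀) (hN : μ k₀ ≤ N)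
    (hμ : StrictMono μ) (hμ0 : μ 0 = 1)
    (hg : MonotoneOn (fun n => ω n * (n : ℝ≥0∞) ^ r) (Set.Ici 1))
    (hgμ : ∀ k, (ω (μ k) * (μ k : ℝ≥0∞) ^ r) ^ 2 ≤ 2⁻¹ * (ω (μ (k + 1)) * (μ (k + 1) : ℝ≥0∞) ^ r) ^ 2)
    (hB : blockSum (l + r) R (μ k) (μ (k + 1))
      ≤ C * (ω (μ (k + 1) - 1) * ((μ (k + 1) - 1 : ℕ) : ℝ≥0∞) ^ r) ^ 2) :
    ∑ n ∈ Ico (μ k) (μ (k + 1)), weightedSq l r N R n ≤ 2 * C * 2⁻¹ ^ Nat.dist k k₀ * ω N ^ 2 := by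
  have hμ1 : ∀ k, 1 ≤ μ k := fun k => hμ0 ▸ hμ.monotone k.zero_le
  have hμk : μ k < μ (k + 1) := hμ k.lt_succ_self
  have hN0 : N ≠ 0 := by have := hμ1 k₀; omega
  set g := fun n : ℕ => ω n * (n : ℝ≥0∞) ^ r
  have hgrowth : g (μ (k + 1)) ^ 2 ≤ 2⁻¹ ^ (k₀ - (k + 1)) * g (μ k₀) ^ 2 := by
    have := le_pow_mul_of_forall_le_succ (u := fun k => g (μ k) ^ 2) hgμ (k + 1) (k₀ - (k + 1))
    rwa [Nat.add_sub_cancel' hk] at this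
  have hweight : (2⁻¹ : ℝ≥0∞) ^ (k₀ - (k + 1)) = 2 * 2⁻¹ ^ Nat.dist k k₀ := by
    rw [Nat.dist_eq_sub_of_le hk.le, show k₀ - k = k₀ - (k + 1) + 1 by omega]
    exact ENNReal.inv_two_pow_eq_two_mul_inv_two_pow_succ _
  refine (ENNReal.mul_le_mul_iff_right (a := ((N : ℝ≥0∞) ^ r) ^ 2) (by simp [hN0]) (by simp)).mp ?_
  calc ((N : ℝ≥0∞) ^ r) ^ 2 * ∑ n ∈ Ico (μ k) (μ (k + 1)), weightedSq l r N R n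
      ≤ blockSum (l + r) R (μ k) (μ (k + 1)) := pow_sq_mul_sum_weightedSq_le_blockSum_add hN0
    _ ≤ C * g (μ (k + 1)) ^ 2 := hB.trans <| by
        gcongr; exact hg (show 1 ≤ μ (k + 1) - 1 by have := hμ1 k; omega) (hμ1 _) (Nat.sub_le _ 1)
    _ ≤ C * (2⁻¹ ^ (k₀ - (k + 1)) * g N ^ 2) := by
        gcongr; exact hgrowth.trans (by gcongr; exact hg (hμ1 _) (hμ1 k₀ |>.trans hN) hN)
    _ = ((N : ℝ≥0∞) ^ r) ^ 2 * (2 * C * 2⁻¹ ^ Nat.dist k k₀ * ω N ^ 2) := by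
        rw [hweight]; ring

lemma sum_weightedSq_le_of_gt {k k₀ : ℕ} (hk : k₀ < k) (hN : N < μ (k₀ + 1)) (hN1 : 1 ≤ N)
    (hω : AntitoneOn ω (Set.Ici 1)) (hωμ : ∀ k, ω (μ (k + 1)) ^ 2 ≤ 2⁻¹ * ω (μ k) ^ 2)
    (hA : blockSum l R (μ k) (μ (k + 1)) ≤ C * ω (μ k) ^ 2) :
    ∑ n ∈ Ico (μ k) (μ (k + 1)), weightedSq l r N R n ≤ 2 * C * 2⁻¹ ^ Nat.dist k k₀ * ω N ^ 2 := by
  have hdecay : ω (μ k) ^ 2 ≤ 2⁻¹ ^ (k - (k₀ + 1)) * ω (μ (k₀ + 1)) ^ 2 := by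
    have := le_pow_mul_of_forall_succ_le (u := fun k => ω (μ k) ^ 2) hωμ (k₀ + 1) (k - (k₀ + 1))
    rwa [Nat.add_sub_cancel' hk] at this
  have hweight : (2⁻¹ : ℝ≥0∞) ^ (k - (k₀ + 1)) = 2 * 2⁻¹ ^ Nat.dist k k₀ := by
    rw [Nat.dist_eq_sub_of_le_right hk.le, show k - k₀ = k - (k₀ + 1) + 1 by omega]
    exact ENNReal.inv_two_pow_eq_two_mul_inv_two_pow_succ _
  calc ∑ n ∈ Ico (μ k) (μ (k + 1)), weightedSq l r N R n ≤ blockSum l R (μ k) (μ (k + 1)) :=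
        sum_weightedSq_le_blockSum
    _ ≤ C * (2⁻¹ ^ (k - (k₀ + 1)) * ω N ^ 2) := hA.trans <| by
        gcongr; exact hdecay.trans (by gcongr; exact hω hN1 (hN1.trans hN.le) hN.le)
    _ = 2 * C * 2⁻¹ ^ Nat.dist k k₀ * ω N ^ 2 := by rw [hweight]; ring

end Backward

section Assembly

variable {l r N : ℕ} {R ω : ℕ → ℝ≥0∞} {μ : ℕ → ℕ} {C K : ℝ≥0∞}

lemma blockSum_le_tsum_weightedSq (hμ : StrictMono μ) (hμ0 : μ 0 = 1) (k : ℕ) :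
    blockSum l R (μ k) (μ (k + 1)) ≤ ∑' n, weightedSq l r (μ k) R (n + 1) := by
  have hμk : μ k ≠ 0 := by have := hμ.monotone k.zero_le; omega
  rw [← sum_weightedSq_eq_blockSum hμk le_rfl]
  exact sum_Ico_le_tsum_succ hμ hμ0 _ k

lemma blockSum_add_le_tsum_weightedSq (hμ : StrictMono μ) (hμ0 : μ 0 = 1) (k : ℕ) :
    blockSum (l + r) R (μ k) (μ (k + 1))
      ≤ (((μ (k + 1) - 1 : ℕ) : ℝ≥0∞) ^ r) ^ 2 * ∑' n, weightedSq l r (μ (k + 1) - 1) R (n + 1) := by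
  have hM : μ (k + 1) - 1 ≠ 0 := by
    have := hμ.monotone k.zero_le; have := hμ (Nat.lt_add_one k); omega
  rw [← pow_sq_mul_sum_weightedSq_eq_blockSum_add hM (by omega)]
  gcongr
  exact sum_Ico_le_tsum_succ hμ hμ0 _ k

lemma sum_weightedSq_le_inv_two_pow_dist {k₀ : ℕ} (hμ : StrictMono μ) (hμ0 : μ 0 = 1)
    (hk₀N : μ k₀ ≤ N) (hNk₀ : N < μ (k₀ + 1))
    (hω : AntitoneOn ω (Set.Ici 1))
    (hg : MonotoneOn (fun n => ω n * (n : ℝ≥0∞) ^ r) (Set.Ici 1))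
    (hωμ : ∀ k, ω (μ (k + 1)) ^ 2 ≤ 2⁻¹ * ω (μ k) ^ 2)
    (hgμ : ∀ k, (ω (μ k) * (μ k : ℝ≥0∞) ^ r) ^ 2 ≤ 2⁻¹ * (ω (μ (k + 1)) * (μ (k + 1) : ℝ≥0∞) ^ r) ^ 2)
    (hblock : ∀ k, BlockBound l r R ω C K (μ k) (μ (k + 1)))
    (k : ℕ) :
    ∑ n ∈ Ico (μ k) (μ (k + 1)), weightedSq l r N R n
      ≤ 2 * (C * (1 + K ^ 2)) * (1 + K ^ 2) * ω N ^ 2 * 2⁻¹ ^ Nat.dist k k₀ := by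
  have hμpos : ∀ j, 0 < μ j := fun j => by have := hμ.monotone j.zero_le; omega
  have hbounds j := (hblock j).blockSums_le (hμpos j).ne'
  set C' := C * (1 + K ^ 2)
  have hC' : 2 * C' ≤ 2 * C' * (1 + K ^ 2) := le_mul_of_one_le_right' le_self_add
  rcases lt_trichotomy k k₀ with hk | rfl | hk
  · calc _ ≤ 2 * C' * 2⁻¹ ^ Nat.dist k k₀ * ω N ^ 2 :=
          sum_weightedSq_le_of_lt hk hk₀N hμ hμ0 hg hgμ (hbounds k).2
      _ ≤ _ := by rw [mul_right_comm _ (2⁻¹ ^ _)]; gcongr ?_ * _ * _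
  · have hK : C' * K ^ 2 ≤ 2 * C' * (1 + K ^ 2) := by
      gcongr
      · exact le_mul_of_one_le_left' one_le_two
      · exact le_add_self
    calc _ ≤ C' * K ^ 2 * ω N ^ 2 := sum_weightedSq_le_of_mem_Ico (hμpos k) hk₀N hNk₀ hω hg
          (hbounds k).1 (hbounds k).2 (Or.imp And.right And.right (hblock k))
      _ ≤ _ := by rw [Nat.dist_self, pow_zero, mul_one]; gcongr
  · calc _ ≤ 2 * C' * 2⁻¹ ^ Nat.dist k k₀ * ω N ^ 2 :=
          sum_weightedSq_le_of_gt hk hNk₀ (hμpos k₀ |>.trans_le hk₀N) hω hωμ (hbounds k).1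
      _ ≤ _ := by rw [mul_right_comm _ (2⁻¹ ^ _)]; gcongr ?_ * _ * _

lemma tsum_weightedSq_le (hμ : StrictMono μ) (hμ0 : μ 0 = 1) (hN : 1 ≤ N)
    (hω : AntitoneOn ω (Set.Ici 1))
    (hg : MonotoneOn (fun n => ω n * (n : ℝ≥0∞) ^ r) (Set.Ici 1))
    (hωμ : ∀ k, ω (μ (k + 1)) ^ 2 ≤ 2⁻¹ * ω (μ k) ^ 2)
    (hgμ : ∀ k, (ω (μ k) * (μ k : ℝ≥0∞) ^ r) ^ 2 ≤ 2⁻¹ * (ω (μ (k + 1)) * (μ (k + 1) : ℝ≥0∞) ^ r) ^ 2)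
    (hblock : ∀ k, BlockBound l r R ω C K (μ k) (μ (k + 1))) :
    ∑' n, weightedSq l r N R (n + 1) ≤ 3 * (2 * (C * (1 + K ^ 2)) * (1 + K ^ 2)) * ω N ^ 2 := by
  obtain ⟨k₀, hk₀N, hNk₀⟩ := hμ.exists_le_lt_succ (hμ0 ▸ hN)
  set D := 2 * (C * (1 + K ^ 2)) * (1 + K ^ 2)
  calc ∑' n, weightedSq l r N R (n + 1)
      = ∑' k, ∑ n ∈ Ico (μ k) (μ (k + 1)), weightedSq l r N R n :=
        tsum_succ_eq_tsum_sum_Ico hμ hμ0 _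
    _ ≤ ∑' k, D * ω N ^ 2 * 2⁻¹ ^ Nat.dist k k₀ := ENNReal.tsum_le_tsum
        (sum_weightedSq_le_inv_two_pow_dist hμ hμ0 hk₀N hNk₀ hω hg hωμ hgμ hblock)
    _ = D * ω N ^ 2 * ∑' k, (2⁻¹ : ℝ≥0∞) ^ Nat.dist k k₀ := ENNReal.tsum_mul_left
    _ ≤ D * ω N ^ 2 * 3 := by gcongr; exact ENNReal.tsum_inv_two_pow_dist_le k₀
    _ = 3 * D * ω N ^ 2 := by ring

end Assembly

theorem stmt9_general (l r : ℕ) (lam : ℝ≥0∞) (hlam : 4 < lam)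
    (cI CI : ℝ≥0∞) (hc : cI ≠ 0) (hC : CI ≠ ⊤)
    (ω : ℕ → ℝ≥0∞)
    (hdec : ∀ n, 1 ≤ n → ω (n+1) ≤ ω n)
    (hinc : ∀ n, 1 ≤ n → ω n * (n : ℝ≥0∞) ^ r ≤ ω (n+1) * ((n+1 : ℕ) : ℝ≥0∞) ^ r)
    (μ : ℕ → ℕ) (I J : Set ℕ) (hμ0 : μ 0 = 1) (hmono : StrictMono μ)
    (h4 : ∀ k, lam * ω (μ (k+1)) ≤ ω (μ k))
    (h5 : ∀ k, lam * (ω (μ k) * (μ k : ℝ≥0∞) ^ r) ≤ ω (μ (k+1)) * (μ (k+1) : ℝ≥0∞) ^ r)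
    (hIJ : I ∪ J = Set.univ)
    (hI : ∀ k ∈ I, cI * ω (μ k) ≤ ω (μ (k+1) - 1) ∧ ω (μ (k+1) - 1) ≤ CI * ω (μ k))
    (hJ : ∀ k ∈ J, cI * (ω (μ k) * (μ k : ℝ≥0∞) ^ r) ≤
        ω (μ (k+1) - 1) * ((μ (k+1) - 1 : ℕ) : ℝ≥0∞) ^ r ∧
      ω (μ (k+1) - 1) * ((μ (k+1) - 1 : ℕ) : ℝ≥0∞) ^ r ≤
        CI * (ω (μ k) * (μ k : ℝ≥0∞) ^ r))
    (R : ℕ → ℝ≥0∞) :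
    (∃ C : ℝ≥0∞, C ≠ ⊤ ∧ ∀ N : ℕ, 1 ≤ N →
      (∑' n : ℕ, (R (n+1) * ((n+1 : ℕ) : ℝ≥0∞) ^ l *
        min 1 (((n+1 : ℕ) : ℝ≥0∞) ^ r / (N : ℝ≥0∞) ^ r)) ^ 2) ≤ C * (ω N) ^ 2)
    ↔ (∃ C : ℝ≥0∞, C ≠ ⊤ ∧ ∀ k : ℕ,
        (k ∈ I → (∑ n ∈ Finset.Ico (μ k) (μ (k+1)), ((n : ℝ≥0∞) ^ l * R n) ^ 2) ≤
          C * (ω (μ k)) ^ 2) ∧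
        (k ∈ J → (∑ n ∈ Finset.Ico (μ k) (μ (k+1)), ((n : ℝ≥0∞) ^ (l+r) * R n) ^ 2) ≤
          C * (((μ (k+1) - 1 : ℕ) : ℝ≥0∞) ^ r * ω (μ (k+1) - 1)) ^ 2)) := by
  have hμ1 : ∀ k, 0 < μ k := fun k => (hμ0 ▸ hmono.monotone k.zero_le : 1 ≤ μ k)
  constructor
  · rintro ⟨C, hCfin, hbound⟩
    refine ⟨C, hCfin, fun k => ⟨fun _ => ?_, fun _ => ?_⟩⟩
    · exact (blockSum_le_tsum_weightedSq hmono hμ0 k).trans (hbound _ (hμ1 k))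
    · calc blockSum (l + r) R (μ k) (μ (k + 1))
          ≤ (((μ (k + 1) - 1 : ℕ) : ℝ≥0∞) ^ r) ^ 2 * (C * ω (μ (k + 1) - 1) ^ 2) := by
            refine (blockSum_add_le_tsum_weightedSq hmono hμ0 k).trans ?_
            gcongr
            exact hbound _ (by have := hmono (Nat.lt_add_one k); have := hμ1 k; omega)
        _ = C * (((μ (k + 1) - 1 : ℕ) : ℝ≥0∞) ^ r * ω (μ (k + 1) - 1)) ^ 2 := by ring
  · rintro ⟨C, hCfin, hblk⟩
    set K := (min cI 1)⁻¹ + CI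
    have hblock : ∀ k, BlockBound l r R ω C K (μ k) (μ (k + 1)) := by
      intro k
      rcases (hIJ ▸ Set.mem_univ k : k ∈ I ∪ J) with hk | hk
      · exact .inl ⟨(hblk k).1 hk,
          (ENNReal.le_inv_min_one_mul hc (hI k hk).1).trans (by gcongr; exact le_self_add)⟩
      · exact .inr ⟨((hblk k).2 hk).trans_eq (by ring),
          (hJ k hk).2.trans (by gcongr; exact le_add_self)⟩
    have h2lam : 2 ≤ lam := le_trans (by norm_num) hlam.le
    refine ⟨3 * (2 * (C * (1 + K ^ 2)) * (1 + K ^ 2)), ?_, fun N hN => ?_⟩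
    · have : K ≠ ⊤ := by simp [K, hc, hC]
      finiteness
    · exact tsum_weightedSq_le hmono hμ0 hN (antitoneOn_nat_Ici_of_succ_le hdec)
        (monotoneOn_nat_Ici_of_le_succ hinc) (fun k => ENNReal.sq_le_inv_two_mul_sq h2lam (h4 k))
        (fun k => ENNReal.sq_le_inv_two_mul_sq h2lam (h5 k)) hblock

/-- Littlewood–Paley type characterization (Lemma 2.4): for `R_n ≥ 0`, the uniform
bound `Σ_n (R_n n^l min(1, n^r/N^r))² ≲ ω_N²` for all `N ≥ 1` is equivalent to the
blockwise bounds along a discretizing sequence `(μ_k)` with index sets `I, J`. -/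
theorem stmt9 (l r : ℕ) (hr : 1 ≤ r) (lam : ℝ≥0∞) (hlam : 4 < lam)
    (cI CI : ℝ≥0∞) (hc : cI ≠ 0) (hC : CI ≠ ⊤)
    (ω : ℕ → ℝ≥0∞) (hpos : ∀ n, 1 ≤ n → ω n ≠ 0) (hfin : ∀ n, ω n ≠ ⊤)
    (hdec : ∀ n, 1 ≤ n → ω (n+1) ≤ ω n)
    (hinc : ∀ n, 1 ≤ n → ω n * (n : ℝ≥0∞) ^ r ≤ ω (n+1) * ((n+1 : ℕ) : ℝ≥0∞) ^ r)
    (μ : ℕ → ℕ) (I J : Set ℕ) (hμ0 : μ 0 = 1) (hmono : StrictMono μ)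
    (h3 : ∀ k, lam * (μ k : ℝ≥0∞) ^ r ≤ (μ (k+1) : ℝ≥0∞) ^ r)
    (h4 : ∀ k, lam * ω (μ (k+1)) ≤ ω (μ k))
    (h5 : ∀ k, lam * (ω (μ k) * (μ k : ℝ≥0∞) ^ r) ≤ ω (μ (k+1)) * (μ (k+1) : ℝ≥0∞) ^ r)
    (hIJ : I ∪ J = Set.univ)
    (hI : ∀ k ∈ I, cI * ω (μ k) ≤ ω (μ (k+1) - 1) ∧ ω (μ (k+1) - 1) ≤ CI * ω (μ k))
    (hJ : ∀ k ∈ J, cI * (ω (μ k) * (μ k : ℝ≥0∞) ^ r) ≤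
        ω (μ (k+1) - 1) * ((μ (k+1) - 1 : ℕ) : ℝ≥0∞) ^ r ∧
      ω (μ (k+1) - 1) * ((μ (k+1) - 1 : ℕ) : ℝ≥0∞) ^ r ≤
        CI * (ω (μ k) * (μ k : ℝ≥0∞) ^ r))
    (R : ℕ → ℝ≥0∞) :
    (∃ C : ℝ≥0∞, C ≠ ⊤ ∧ ∀ N : ℕ, 1 ≤ N →
      (∑' n : ℕ, (R (n+1) * ((n+1 : ℕ) : ℝ≥0∞) ^ l *
        min 1 (((n+1 : ℕ) : ℝ≥0∞) ^ r / (N : ℝ≥0∞) ^ r)) ^ 2) ≤ C * (ω N) ^ 2)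
    ↔ (∃ C : ℝ≥0∞, C ≠ ⊤ ∧ ∀ k : ℕ,
        (k ∈ I → (∑ n ∈ Finset.Ico (μ k) (μ (k+1)), ((n : ℝ≥0∞) ^ l * R n) ^ 2) ≤
          C * (ω (μ k)) ^ 2) ∧
        (k ∈ J → (∑ n ∈ Finset.Ico (μ k) (μ (k+1)), ((n : ℝ≥0∞) ^ (l+r) * R n) ^ 2) ≤
          C * (((μ (k+1) - 1 : ℕ) : ℝ≥0∞) ^ r * ω (μ (k+1) - 1)) ^ 2)) :=
  stmt9_general l r lam hlam cI CI hc hC ω hdec hinc μ I J hμ0 hmono h4 h5 hIJ hI hJ R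
end

section
/- Let p, r > 0 and (α_n) non-negative with Σ α_n/(1+n^{pr}) < ∞, and define ω_n^p := Σ_{m=1}^∞ α_m/(n^{pr}+m^{pr}). Then Σ_{n=1}^∞ α_n·n^{−pr}·(log(n+1))^{1−p/2} is comparable to Σ_{n=1}^∞ (n·(log(n+1))^{p/2})^{−1}·ω_n^p, with constants depending only on p and r (both sides possibly infinite simultaneously). -/
open scoped ENNReal

/-- The weight `ω_n^p = Σ_m α_m/(n^{pr}+m^{pr})`. -/
noncomputable def omegaP (p r : ℝ) (α : ℕ → ℝ≥0∞) (n : ℕ) : ℝ≥0∞ :=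
  ∑' m : ℕ, α (m+1) / ((n : ℝ≥0∞) ^ (p * r) + ((m+1 : ℕ) : ℝ≥0∞) ^ (p * r))

/-!
Exchanging the order of summation turns the sum involving `ω_n^p` into `∑ₘ αₘ Kₘ` with
`Kₘ = ∑ₙ (n log^{p/2}(n+1))⁻¹ / (n^{pr} + m^{pr})`, so it suffices to show
`Kₘ ≍ m^{-pr} log^{1-p/2}(m+1)` uniformly in `m`. For `n ≤ m` the summand is comparable to
`m^{-pr} (n log^{p/2}(n+1))⁻¹`, and these sum to `≍ m^{-pr} log^{1-p/2}(m+1)`: from below since the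
harmonic sum dominates `log`, from above by telescoping `log^{1-p/2}` (a concave power as `p < 2`).
For `n > m` the summand is at most `n^{-1-pr} / log^{p/2}(m+1)`, and
`∑_{n>m} n^{-1-pr} ≤ m^{-pr}/(pr)` by telescoping the convex function `x ↦ x^{-pr}`.
-/

open Finset Real

lemma one_add_mul_self_le_rpow_one_add_of_nonpos {s : ℝ} (hs : -1 < s) {p : ℝ} (hp : p ≤ 0) :
    1 + p * s ≤ (1 + s) ^ p := by
  have hlog : log (1 + s) ≤ s := by linarith [log_le_sub_one_of_pos (by linarith : 0 < 1 + s)]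
  rw [rpow_def_of_pos (by linarith)]
  nlinarith [add_one_le_exp (log (1 + s) * p)]

lemma rpow_add_mul_sub_eq {b : ℝ} (hb : 0 < b) (a t : ℝ) :
    b ^ t + t * b ^ (t - 1) * (a - b) = b ^ t * (1 + t * (a / b - 1)) := by
  rw [rpow_sub_one hb.ne']; field_simp

lemma rpow_eq_rpow_mul_one_add_div_sub_one {a b : ℝ} (ha : 0 ≤ a) (hb : 0 < b) (t : ℝ) :
    a ^ t = b ^ t * (1 + (a / b - 1)) ^ t := by
  rw [add_sub_cancel, div_rpow ha hb.le, mul_div_cancel₀ _ (rpow_pos_of_pos hb t).ne']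

lemma rpow_le_rpow_add_mul_sub {t a b : ℝ} (ht0 : 0 ≤ t) (ht1 : t ≤ 1) (ha : 0 ≤ a) (hb : 0 < b) :
    a ^ t ≤ b ^ t + t * b ^ (t - 1) * (a - b) := by
  rw [rpow_add_mul_sub_eq hb, rpow_eq_rpow_mul_one_add_div_sub_one ha hb]
  have : -1 ≤ a / b - 1 := by linarith [div_nonneg ha hb.le]
  exact mul_le_mul_of_nonneg_left (rpow_one_add_le_one_add_mul_self this ht0 ht1)
    (rpow_pos_of_pos hb t).le

lemma rpow_add_mul_sub_le_rpow {t a b : ℝ} (ht : t ≤ 0) (ha : 0 < a) (hb : 0 < b) :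
    b ^ t + t * b ^ (t - 1) * (a - b) ≤ a ^ t := by
  rw [rpow_add_mul_sub_eq hb, rpow_eq_rpow_mul_one_add_div_sub_one ha.le hb]
  have : -1 < a / b - 1 := by linarith [div_pos ha hb]
  exact mul_le_mul_of_nonneg_left (one_add_mul_self_le_rpow_one_add_of_nonpos this ht)
    (rpow_pos_of_pos hb t).le

lemma log_le_sum_range_inv (N : ℕ) : log ((N : ℝ) + 1) ≤ ∑ n ∈ range N, ((n : ℝ) + 1)⁻¹ := by
  have := log_add_one_le_harmonic N
  simp only [harmonic, Rat.cast_sum, Rat.cast_inv, Rat.cast_natCast] at this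
  exact_mod_cast this

lemma inv_mul_log_rpow_le {q : ℝ} (hq0 : 0 ≤ q) (hq1 : q < 1) (n : ℕ) :
    (((n : ℝ) + 1) * log ((n : ℝ) + 2) ^ q)⁻¹ ≤
      2 / (1 - q) * (log ((n : ℝ) + 2) ^ (1 - q) - log ((n : ℝ) + 1) ^ (1 - q)) := by
  set b := log ((n : ℝ) + 2)
  set a := log ((n : ℝ) + 1)
  have hn : (0 : ℝ) < (n : ℝ) + 1 := by positivity
  have hb : 0 < b := log_pos (by linarith)
  have ha : 0 ≤ a := log_nonneg (by linarith)
  have hgap : (2 * ((n : ℝ) + 1))⁻¹ ≤ b - a := by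
    have h := one_sub_inv_le_log_of_pos (div_pos (by linarith : (0:ℝ) < n + 2) hn)
    rw [log_div (by linarith) hn.ne'] at h
    have h1 : 1 - (((n : ℝ) + 2) / ((n : ℝ) + 1))⁻¹ = ((n : ℝ) + 2)⁻¹ := by field_simp; ring
    calc (2 * ((n : ℝ) + 1))⁻¹ ≤ ((n : ℝ) + 2)⁻¹ := inv_anti₀ (by positivity) (by linarith)
      _ = 1 - (((n : ℝ) + 2) / ((n : ℝ) + 1))⁻¹ := h1.symm
      _ ≤ b - a := h
  have htan := rpow_le_rpow_add_mul_sub (t := 1 - q) (by linarith) (by linarith) ha hb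
  rw [show 1 - q - 1 = -q by ring, rpow_neg hb.le] at htan
  have hbq : 0 < b ^ q := rpow_pos_of_pos hb q
  have hq : 0 < 1 - q := by linarith
  calc (((n : ℝ) + 1) * b ^ q)⁻¹
        = 2 / (1 - q) * ((1 - q) * (b ^ q)⁻¹ * (2 * ((n : ℝ) + 1))⁻¹) := by field_simp
    _ ≤ 2 / (1 - q) * ((1 - q) * (b ^ q)⁻¹ * (b - a)) := by
        gcongr
    _ ≤ 2 / (1 - q) * (b ^ (1 - q) - a ^ (1 - q)) := by
        gcongr; linarith

lemma sum_range_inv_mul_log_rpow_le {q : ℝ} (hq0 : 0 ≤ q) (hq1 : q < 1) (N : ℕ) :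
    ∑ n ∈ range N, (((n : ℝ) + 1) * log ((n : ℝ) + 2) ^ q)⁻¹ ≤
      2 / (1 - q) * log ((N : ℝ) + 1) ^ (1 - q) := by
  set f : ℕ → ℝ := fun n ↦ log ((n : ℝ) + 1) ^ (1 - q)
  have hf0 : f 0 = 0 := by simp [f, zero_rpow (by linarith : 1 - q ≠ 0)]
  calc ∑ n ∈ range N, (((n : ℝ) + 1) * log ((n : ℝ) + 2) ^ q)⁻¹
      ≤ ∑ n ∈ range N, 2 / (1 - q) * (f (n + 1) - f n) := by
        refine sum_le_sum fun n _ ↦ ?_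
        simpa [f, add_assoc, one_add_one_eq_two] using inv_mul_log_rpow_le hq0 hq1 n
    _ = 2 / (1 - q) * f N := by rw [← mul_sum, sum_range_sub, hf0, sub_zero]

lemma mul_rpow_neg_le_sub {s x : ℝ} (hs : 0 ≤ s) (hx : 0 < x) :
    s * (x + 1) ^ (-(s + 1)) ≤ x ^ (-s) - (x + 1) ^ (-s) := by
  have h := rpow_add_mul_sub_le_rpow (t := -s) (by linarith) hx (by linarith : 0 < x + 1)
  rw [show -s - 1 = -(s + 1) by ring] at h
  linarith

lemma sum_range_rpow_neg_le {s x : ℝ} (hs : 0 < s) (hx : 0 < x) (K : ℕ) :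
    ∑ k ∈ range K, (x + 1 + k) ^ (-(s + 1)) ≤ x ^ (-s) / s := by
  set g : ℕ → ℝ := fun k ↦ (x + k) ^ (-s)
  calc ∑ k ∈ range K, (x + 1 + k) ^ (-(s + 1))
      ≤ ∑ k ∈ range K, (g k - g (k + 1)) / s := by
        refine sum_le_sum fun k _ ↦ ?_
        rw [le_div_iff₀ hs, mul_comm]
        have := mul_rpow_neg_le_sub hs.le (by positivity : 0 < x + k)
        simpa [g, add_right_comm, add_assoc] using this
    _ = (g 0 - g K) / s := by rw [← sum_div, sum_range_sub']
    _ ≤ x ^ (-s) / s := by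
        gcongr
        simp only [g, CharP.cast_eq_zero, add_zero, sub_le_self_iff]
        positivity

section Kernel

variable {a u : ℕ → ℝ≥0∞} {k : ℕ → ℕ → ℝ≥0∞}

lemma mul_tsum_le_tsum_tsum_of_le_tsum {c : ℝ≥0∞} (h : ∀ m, c * u m ≤ ∑' n, k m n) :
    c * ∑' m, a m * u m ≤ ∑' n, ∑' m, a m * k m n := by
  rw [ENNReal.tsum_comm, ← ENNReal.tsum_mul_left]
  refine ENNReal.tsum_le_tsum fun m ↦ ?_
  rw [ENNReal.tsum_mul_left, mul_left_comm]
  gcongr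
  exact h m

lemma tsum_tsum_le_mul_tsum_of_tsum_le {C : ℝ≥0∞} (h : ∀ m, ∑' n, k m n ≤ C * u m) :
    ∑' n, ∑' m, a m * k m n ≤ C * ∑' m, a m * u m := by
  rw [ENNReal.tsum_comm, ← ENNReal.tsum_mul_left]
  refine ENNReal.tsum_le_tsum fun m ↦ ?_
  rw [ENNReal.tsum_mul_left, mul_left_comm]
  gcongr
  exact h m

end Kernel

lemma log_two_le_log_natCast_add_two (n : ℕ) : log 2 ≤ log ((n : ℝ) + 2) :=
  log_le_log two_pos (by linarith [n.cast_nonneg (α := ℝ)])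

lemma log_natCast_add_two_pos (n : ℕ) : 0 < log ((n : ℝ) + 2) :=
  (log_pos one_lt_two).trans_le (log_two_le_log_natCast_add_two n)

/-- With `s = p r` and `q = p / 2`, `logKernel s q m n` is the coefficient of `α (m + 1)` in the
`n`-th term of the sum involving `omegaP`, and `logWeight s q m` its counterpart in the other sum;
all indices are shifted by one. -/
noncomputable def logKernel (s q : ℝ) (m n : ℕ) : ℝ :=
  (((n : ℝ) + 1) * log ((n : ℝ) + 2) ^ q)⁻¹ * (((n : ℝ) + 1) ^ s + ((m : ℝ) + 1) ^ s)⁻¹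

noncomputable def logWeight (s q : ℝ) (m : ℕ) : ℝ :=
  ((m : ℝ) + 1) ^ (-s) * log ((m : ℝ) + 2) ^ (1 - q)

lemma logKernel_nonneg (s q : ℝ) (m n : ℕ) : 0 ≤ logKernel s q m n := by
  have := log_natCast_add_two_pos n
  unfold logKernel; positivity

section LogKernel

variable {s q : ℝ}

lemma logWeight_div_two_le_sum_logKernel (hs : 0 ≤ s) (hq : 0 ≤ q) (m : ℕ) :
    logWeight s q m / 2 ≤ ∑ n ∈ range (m + 1), logKernel s q m n := by
  set ℓ := log ((m : ℝ) + 2)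
  have hℓ : 0 < ℓ := log_natCast_add_two_pos m
  have hterm : ∀ n ∈ range (m + 1),
      (((n : ℝ) + 1) * ℓ ^ q)⁻¹ * (2 * ((m : ℝ) + 1) ^ s)⁻¹ ≤ logKernel s q m n := by
    intro n hn
    have hnm : (n : ℝ) ≤ m := by exact_mod_cast Nat.lt_succ_iff.mp (mem_range.mp hn)
    have := log_natCast_add_two_pos n
    have hlog : log ((n : ℝ) + 2) ≤ ℓ := log_le_log (by positivity) (by linarith)
    have hpow : ((n : ℝ) + 1) ^ s ≤ ((m : ℝ) + 1) ^ s := by gcongr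
    rw [logKernel]
    gcongr
    linarith
  have hharm : ℓ ≤ ∑ n ∈ range (m + 1), ((n : ℝ) + 1)⁻¹ := by
    have := log_le_sum_range_inv (m + 1)
    rwa [Nat.cast_succ, add_assoc, one_add_one_eq_two] at this
  calc logWeight s q m / 2 = ℓ * ((ℓ ^ q)⁻¹ * (2 * ((m : ℝ) + 1) ^ s)⁻¹) := by
        rw [logWeight, rpow_neg (by positivity), rpow_sub hℓ, rpow_one]
        field_simp
    _ ≤ (∑ n ∈ range (m + 1), ((n : ℝ) + 1)⁻¹) * ((ℓ ^ q)⁻¹ * (2 * ((m : ℝ) + 1) ^ s)⁻¹) := by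
        gcongr
    _ ≤ ∑ n ∈ range (m + 1), logKernel s q m n := by
        rw [sum_mul]
        refine le_of_eq_of_le (sum_congr rfl fun n _ ↦ ?_) (sum_le_sum hterm)
        rw [mul_inv ((n : ℝ) + 1)]; ring

lemma sum_range_logKernel_le (hq0 : 0 ≤ q) (hq1 : q < 1) (m : ℕ) :
    ∑ n ∈ range (m + 1), logKernel s q m n ≤ 2 / (1 - q) * logWeight s q m := by
  have hm : (0 : ℝ) < ((m : ℝ) + 1) ^ s := by positivity
  have hhead := sum_range_inv_mul_log_rpow_le hq0 hq1 (m + 1)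
  rw [Nat.cast_succ, add_assoc, one_add_one_eq_two] at hhead
  calc ∑ n ∈ range (m + 1), logKernel s q m n
      ≤ ∑ n ∈ range (m + 1),
          (((n : ℝ) + 1) * log ((n : ℝ) + 2) ^ q)⁻¹ * (((m : ℝ) + 1) ^ s)⁻¹ := by
        refine sum_le_sum fun n _ ↦ ?_
        have := log_natCast_add_two_pos n
        rw [logKernel]
        gcongr
        linarith [rpow_nonneg (by positivity : (0 : ℝ) ≤ n + 1) s]
    _ ≤ 2 / (1 - q) * log ((m : ℝ) + 2) ^ (1 - q) * (((m : ℝ) + 1) ^ s)⁻¹ := by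
        rw [← sum_mul]; gcongr
    _ = 2 / (1 - q) * logWeight s q m := by
        rw [logWeight, rpow_neg (by positivity)]; ring

lemma logKernel_le_of_le (hq : 0 ≤ q) {m n : ℕ} (hmn : m ≤ n) :
    logKernel s q m n ≤ ((n : ℝ) + 1) ^ (-(s + 1)) * (log ((m : ℝ) + 2) ^ q)⁻¹ := by
  have hn : (0 : ℝ) < (n : ℝ) + 1 := by positivity
  have := log_natCast_add_two_pos m
  have hlog : log ((m : ℝ) + 2) ≤ log ((n : ℝ) + 2) :=
    log_le_log (by positivity) (by gcongr)
  calc logKernel s q m n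
      ≤ (((n : ℝ) + 1) * log ((m : ℝ) + 2) ^ q)⁻¹ * (((n : ℝ) + 1) ^ s)⁻¹ := by
        rw [logKernel]
        gcongr
        linarith [rpow_nonneg (by positivity : (0 : ℝ) ≤ m + 1) s]
    _ = ((n : ℝ) + 1) ^ (-(s + 1)) * (log ((m : ℝ) + 2) ^ q)⁻¹ := by
        rw [rpow_neg hn.le, rpow_add hn, rpow_one]; simp only [mul_inv]; ring

lemma sum_range_logKernel_add_le (hs : 0 < s) (hq : 0 ≤ q) (m K : ℕ) :
    ∑ k ∈ range K, logKernel s q m (m + 1 + k) ≤ (s * log 2)⁻¹ * logWeight s q m := by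
  set ℓ := log ((m : ℝ) + 2)
  have hℓ : 0 < ℓ := log_natCast_add_two_pos m
  have hℓ2 : 1 ≤ ℓ * (log 2)⁻¹ := by
    rw [← div_eq_mul_inv, one_le_div (log_pos one_lt_two)]
    exact log_two_le_log_natCast_add_two m
  calc ∑ k ∈ range K, logKernel s q m (m + 1 + k)
      ≤ ∑ k ∈ range K, (((m : ℝ) + 1) + 1 + k) ^ (-(s + 1)) * (ℓ ^ q)⁻¹ := by
        refine sum_le_sum fun k _ ↦ (logKernel_le_of_le hq (by omega)).trans_eq ?_
        rw [show ((m + 1 + k : ℕ) : ℝ) + 1 = (m : ℝ) + 1 + 1 + k by push_cast; ring]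
    _ ≤ ((m : ℝ) + 1) ^ (-s) / s * (ℓ ^ q)⁻¹ := by
        rw [← sum_mul]; gcongr; exact sum_range_rpow_neg_le hs (by positivity) K
    _ ≤ ((m : ℝ) + 1) ^ (-s) / s * (ℓ ^ q)⁻¹ * (ℓ * (log 2)⁻¹) :=
        le_mul_of_one_le_right (by positivity) hℓ2
    _ = (s * log 2)⁻¹ * logWeight s q m := by
        rw [logWeight, rpow_sub hℓ, rpow_one]; field_simp

lemma two_inv_mul_ofReal_logWeight_le_tsum (hs : 0 ≤ s) (hq : 0 ≤ q) (m : ℕ) :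
    2⁻¹ * ENNReal.ofReal (logWeight s q m) ≤ ∑' n, ENNReal.ofReal (logKernel s q m n) :=
  calc 2⁻¹ * ENNReal.ofReal (logWeight s q m) = ENNReal.ofReal (logWeight s q m / 2) := by
        rw [div_eq_inv_mul, ENNReal.ofReal_mul (by norm_num), ENNReal.ofReal_inv_of_pos two_pos,
          ENNReal.ofReal_ofNat]
    _ ≤ ENNReal.ofReal (∑ n ∈ range (m + 1), logKernel s q m n) :=
        ENNReal.ofReal_le_ofReal (logWeight_div_two_le_sum_logKernel hs hq m)
    _ = ∑ n ∈ range (m + 1), ENNReal.ofReal (logKernel s q m n) :=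
        ENNReal.ofReal_sum_of_nonneg fun n _ ↦ logKernel_nonneg s q m n
    _ ≤ ∑' n, ENNReal.ofReal (logKernel s q m n) := ENNReal.sum_le_tsum _

lemma tsum_ofReal_logKernel_le (hs : 0 < s) (hq0 : 0 ≤ q) (hq1 : q < 1) (m : ℕ) :
    ∑' n, ENNReal.ofReal (logKernel s q m n) ≤
      ENNReal.ofReal (2 / (1 - q) + (s * log 2)⁻¹) * ENNReal.ofReal (logWeight s q m) := by
  have hq : 0 < 1 - q := by linarith
  rw [← ENNReal.ofReal_mul (by positivity [log_pos one_lt_two])]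
  refine ENNReal.tsum_le_of_sum_range_le fun N ↦ ?_
  rw [← ENNReal.ofReal_sum_of_nonneg fun n _ ↦ logKernel_nonneg s q m n]
  refine ENNReal.ofReal_le_ofReal ?_
  calc ∑ n ∈ range N, logKernel s q m n
      ≤ ∑ n ∈ range (m + 1 + N), logKernel s q m n :=
        sum_le_sum_of_subset_of_nonneg (range_mono (by omega))
          fun n _ _ ↦ logKernel_nonneg s q m n
    _ = ∑ n ∈ range (m + 1), logKernel s q m n + ∑ k ∈ range N, logKernel s q m (m + 1 + k) :=
        sum_range_add _ _ _
    _ ≤ 2 / (1 - q) * logWeight s q m + (s * log 2)⁻¹ * logWeight s q m :=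
        add_le_add (sum_range_logKernel_le hq0 hq1 m) (sum_range_logKernel_add_le hs hq0 m N)
    _ = (2 / (1 - q) + (s * log 2)⁻¹) * logWeight s q m := by ring

end LogKernel

lemma natCast_succ_eq_ofReal (n : ℕ) : ((n + 1 : ℕ) : ℝ≥0∞) = ENNReal.ofReal ((n : ℝ) + 1) := by
  rw [← ENNReal.ofReal_natCast]; push_cast; rfl

lemma ofReal_logKernel (s q : ℝ) (m n : ℕ) :
    ENNReal.ofReal (logKernel s q m n) =
      (((n + 1 : ℕ) : ℝ≥0∞) * ENNReal.ofReal (log ((n : ℝ) + 2)) ^ q)⁻¹ *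
        (((n + 1 : ℕ) : ℝ≥0∞) ^ s + ((m + 1 : ℕ) : ℝ≥0∞) ^ s)⁻¹ := by
  have := log_natCast_add_two_pos n
  have hn : (0 : ℝ) < (n : ℝ) + 1 := by positivity
  have hm : (0 : ℝ) < (m : ℝ) + 1 := by positivity
  rw [natCast_succ_eq_ofReal, natCast_succ_eq_ofReal, ENNReal.ofReal_rpow_of_pos hn,
    ENNReal.ofReal_rpow_of_pos hm, ENNReal.ofReal_rpow_of_pos this,
    ← ENNReal.ofReal_mul (by positivity), ← ENNReal.ofReal_add (by positivity) (by positivity),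
    ← ENNReal.ofReal_inv_of_pos (by positivity), ← ENNReal.ofReal_inv_of_pos (by positivity),
    ← ENNReal.ofReal_mul (by positivity), logKernel]

lemma ofReal_logWeight (s q : ℝ) (m : ℕ) :
    ENNReal.ofReal (logWeight s q m) =
      ((m + 1 : ℕ) : ℝ≥0∞) ^ (-s) * ENNReal.ofReal (log ((m : ℝ) + 2)) ^ (1 - q) := by
  rw [natCast_succ_eq_ofReal, ENNReal.ofReal_rpow_of_pos (by positivity),
    ENNReal.ofReal_rpow_of_pos (log_natCast_add_two_pos m), ← ENNReal.ofReal_mul (by positivity),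
    logWeight]


theorem stmt17_general (p r : ℝ) (hp : 0 < p) (hp2 : p < 2) (hr : 0 < r) (α : ℕ → ℝ≥0∞) :
    ∃ c C : ℝ≥0∞, c ≠ 0 ∧ C ≠ ⊤ ∧
      c * (∑' n : ℕ, α (n+1) * ((n+1 : ℕ) : ℝ≥0∞) ^ (-(p * r)) *
            ENNReal.ofReal (Real.log ((n : ℝ) + 2)) ^ (1 - p/2)) ≤
        (∑' n : ℕ, (((n+1 : ℕ) : ℝ≥0∞) * ENNReal.ofReal (Real.log ((n : ℝ) + 2)) ^ (p/2))⁻¹ *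
            omegaP p r α (n+1))
      ∧ (∑' n : ℕ, (((n+1 : ℕ) : ℝ≥0∞) * ENNReal.ofReal (Real.log ((n : ℝ) + 2)) ^ (p/2))⁻¹ *
            omegaP p r α (n+1)) ≤
        C * (∑' n : ℕ, α (n+1) * ((n+1 : ℕ) : ℝ≥0∞) ^ (-(p * r)) *
            ENNReal.ofReal (Real.log ((n : ℝ) + 2)) ^ (1 - p/2)) := by
  have hs : 0 < p * r := mul_pos hp hr
  have hq0 : 0 ≤ p / 2 := by positivity
  have hq1 : p / 2 < 1 := by linarith
  have hweight : ∀ m : ℕ, α (m + 1) * ((m + 1 : ℕ) : ℝ≥0∞) ^ (-(p * r)) *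
      ENNReal.ofReal (log ((m : ℝ) + 2)) ^ (1 - p / 2) =
        α (m + 1) * ENNReal.ofReal (logWeight (p * r) (p / 2) m) := fun m ↦ by
    rw [ofReal_logWeight, mul_assoc]
  have hkernel : ∀ n : ℕ, (((n + 1 : ℕ) : ℝ≥0∞) * ENNReal.ofReal (log ((n : ℝ) + 2)) ^ (p / 2))⁻¹ *
      omegaP p r α (n + 1) =
        ∑' m, α (m + 1) * ENNReal.ofReal (logKernel (p * r) (p / 2) m n) := fun n ↦ by
    rw [omegaP, ← ENNReal.tsum_mul_left]
    refine tsum_congr fun m ↦ ?_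
    rw [ofReal_logKernel, div_eq_mul_inv (α (m + 1))]; ring
  simp only [hweight, hkernel]
  exact ⟨2⁻¹, _, by simp, ENNReal.ofReal_ne_top,
    mul_tsum_le_tsum_tsum_of_le_tsum (two_inv_mul_ofReal_logWeight_le_tsum hs.le hq0),
    tsum_tsum_le_mul_tsum_of_tsum_le (tsum_ofReal_logKernel_le hs hq0 hq1)⟩

/-- Logarithmic version: `Σ_n α_n n^{-pr} (log(n+1))^{1-p/2} ≈ Σ_n (n (log(n+1))^{p/2})⁻¹ ω_n^p`. -/
theorem stmt17 (p r : ℝ) (hp : 0 < p) (hp2 : p < 2) (hr : 0 < r) (α : ℕ → ℝ≥0∞)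
    (hfin : (∑' n : ℕ, α (n+1) / (1 + ((n+1 : ℕ) : ℝ≥0∞) ^ (p * r))) ≠ ⊤) :
    ∃ c C : ℝ≥0∞, c ≠ 0 ∧ C ≠ ⊤ ∧
      c * (∑' n : ℕ, α (n+1) * ((n+1 : ℕ) : ℝ≥0∞) ^ (-(p * r)) *
            ENNReal.ofReal (Real.log ((n : ℝ) + 2)) ^ (1 - p/2)) ≤
        (∑' n : ℕ, (((n+1 : ℕ) : ℝ≥0∞) * ENNReal.ofReal (Real.log ((n : ℝ) + 2)) ^ (p/2))⁻¹ *
            omegaP p r α (n+1))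
      ∧ (∑' n : ℕ, (((n+1 : ℕ) : ℝ≥0∞) * ENNReal.ofReal (Real.log ((n : ℝ) + 2)) ^ (p/2))⁻¹ *
            omegaP p r α (n+1)) ≤
        C * (∑' n : ℕ, α (n+1) * ((n+1 : ℕ) : ℝ≥0∞) ^ (-(p * r)) *
            ENNReal.ofReal (Real.log ((n : ℝ) + 2)) ^ (1 - p/2)) :=
  stmt17_general p r hp hp2 hr α
end
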